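/- arXiv:1903.03068 — 11 statements merged into one kernel-verified Lean document; each statement's English description precedes it below -/
import Mathlib

section
/- Let P(X) = Σ_{k=0}^d X^k a_k be a quaternionic polynomial of degree d ≥ 1 with quaternion coefficients a_k (written on the right), and suppose |P(x)| ≤ M for all quaternions x with |x| = 1. Then the derivative P'(X) = Σ_{k=1}^d X^{k-1} (k a_k) satisfies |P'(x)| ≤ d·M for all quaternions x with |x| = 1. -/
/-!
Riesz's interpolation formula: with `N = 2d + 1`, `ω` a primitive `N`-th root of unity and the
weights `w_j = ω^{j(d+1)} |∑_{p<d} ω^{jp}|² / N`, one has `∑_j |w_j| = d` and `∑_j w_j ω^{jk} = k`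
for `k ≤ d`. Expanding `|∑_{p<d} ζ^p|² = ∑_{p,q<d} ζ^{p-q}`, orthogonality of the powers of `ω`
turns both sums into counts of pairs `p, q < d` with `p - q = d - k`. Hence
`z P'(z) = ∑_j w_j P(z ω^j)` for every complex polynomial `P` of degree at most `d`, and
Bernstein's inequality on the unit circle follows from the triangle inequality.

The formula only multiplies the values `P(z ω^j)` on the left by complex numbers, so it survives
for polynomials with coefficients on the right in any normed ring containing a copy of `ℂ`. Every
unit quaternion lies in an isometric copy of `ℂ` (the slice through it), and a quaternionic
polynomial restricted to that slice is such a polynomial.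
-/

open Finset

lemma IsPrimitiveRoot.sum_range_zpow_mul {K : Type*} [Field K] {ω : K} {N : ℕ}
    (hω : IsPrimitiveRoot ω N) (m : ℤ) :
    ∑ j ∈ range N, ω ^ ((j : ℤ) * m) = if (N : ℤ) ∣ m then (N : K) else 0 := by
  have hpow (j : ℕ) : ω ^ ((j : ℤ) * m) = (ω ^ m) ^ j := by
    rw [mul_comm, zpow_mul, zpow_natCast]
  simp_rw [hpow]
  split_ifs with h
  · simp [(hω.zpow_eq_one_iff_dvd m).mpr h]
  · rw [geom_sum_eq (mt (hω.zpow_eq_one_iff_dvd m).mp h), ← zpow_natCast, ← zpow_mul, mul_comm,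
      zpow_mul, zpow_natCast, hω.pow_eq_one, one_zpow, sub_self, zero_div]

lemma Complex.norm_geom_sum_sq {ζ : ℂ} (hζ : ‖ζ‖ = 1) (d : ℕ) :
    ((‖∑ p ∈ range d, ζ ^ p‖ ^ 2 : ℝ) : ℂ) = ∑ p ∈ range d, ∑ q ∈ range d, ζ ^ ((p : ℤ) - q) := by
  have hζ0 : ζ ≠ 0 := by rintro rfl; simp at hζ
  rw [Complex.ofReal_pow, ← Complex.mul_conj', map_sum, sum_mul_sum]
  refine sum_congr rfl fun p _ => sum_congr rfl fun q _ => ?_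
  rw [map_pow, ← Complex.inv_eq_conj hζ, zpow_sub₀ hζ0, zpow_natCast, zpow_natCast, inv_pow,
    div_eq_mul_inv]

lemma IsPrimitiveRoot.sum_range_zpow_mul_norm_geom_sum_sq {ω : ℂ} {N : ℕ}
    (hω : IsPrimitiveRoot ω N) (hN : N ≠ 0) (d : ℕ) (n : ℤ) :
    ∑ j ∈ range N, (ω ^ j) ^ n * ((‖∑ p ∈ range d, (ω ^ j) ^ p‖ ^ 2 : ℝ) : ℂ) =
      N * #{pq ∈ range d ×ˢ range d | (N : ℤ) ∣ n + pq.1 - pq.2} := by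
  have hωj (j : ℕ) : ‖ω ^ j‖ = 1 := by
    rw [norm_pow, Complex.norm_eq_one_of_pow_eq_one hω.pow_eq_one hN, one_pow]
  calc ∑ j ∈ range N, (ω ^ j) ^ n * ((‖∑ p ∈ range d, (ω ^ j) ^ p‖ ^ 2 : ℝ) : ℂ)
      = ∑ pq ∈ range d ×ˢ range d, ∑ j ∈ range N, ω ^ ((j : ℤ) * (n + pq.1 - pq.2)) := by
        simp_rw [Complex.norm_geom_sum_sq (hωj _), mul_sum, sum_product,
          ← zpow_add₀ (pow_ne_zero _ (hω.ne_zero hN)), ← zpow_natCast, ← zpow_mul, add_sub_assoc]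
        rw [sum_comm]
        exact sum_congr rfl fun _ _ => sum_comm
    _ = N * #{pq ∈ range d ×ˢ range d | (N : ℤ) ∣ n + pq.1 - pq.2} := by
        simp_rw [hω.sum_range_zpow_mul, card_filter, Nat.cast_sum, mul_sum]
        simp

lemma card_filter_fst_eq_snd_add (d t : ℕ) :
    #{pq ∈ range d ×ˢ range d | pq.1 = pq.2 + t} = d - t := by
  rw [card_filter, sum_product_right]
  simp only [sum_ite_eq', mem_range]
  rw [← card_filter, ← card_range (d - t)]
  congr 1
  ext q
  simp only [mem_filter, mem_range]
  omega

lemma Int.dvd_iff_eq_of_abs_sub_lt {N m s : ℤ} (hs : N ∣ s) (h : |m - s| < N) : N ∣ m ↔ m = s :=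
  ⟨fun hm => sub_eq_zero.mp (Int.eq_zero_of_abs_lt_dvd (dvd_sub hm hs) h), fun h => h ▸ hs⟩

lemma card_filter_dvd_fst_sub_snd (d : ℕ) :
    #{pq ∈ range d ×ˢ range d | ((2 * d + 1 : ℕ) : ℤ) ∣ pq.1 - pq.2} = d := by
  refine (congrArg card (filter_congr fun pq hpq => ?_)).trans (card_filter_fst_eq_snd_add d 0)
  rw [mem_product, mem_range, mem_range] at hpq
  rw [Int.dvd_iff_eq_of_abs_sub_lt (dvd_zero _) (abs_lt.mpr ⟨by omega, by omega⟩)]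
  omega

lemma card_filter_dvd_add_fst_sub_snd {d k : ℕ} (hk : k ≤ d) :
    #{pq ∈ range d ×ˢ range d | ((2 * d + 1 : ℕ) : ℤ) ∣ ((d + 1 + k : ℕ) : ℤ) + pq.1 - pq.2} =
      k := by
  refine (congrArg card (filter_congr fun pq hpq => ?_)).trans
    ((card_filter_fst_eq_snd_add d (d - k)).trans (by omega))
  rw [mem_product, mem_range, mem_range] at hpq
  rw [Int.dvd_iff_eq_of_abs_sub_lt (dvd_refl _) (abs_lt.mpr ⟨by omega, by omega⟩)]
  omega

noncomputable def rieszWeight (ω : ℂ) (d j : ℕ) : ℂ :=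
  (ω ^ j) ^ (d + 1) * ((‖∑ p ∈ range d, (ω ^ j) ^ p‖ ^ 2 : ℝ) : ℂ) / (2 * d + 1 : ℕ)

lemma IsPrimitiveRoot.sum_norm_rieszWeight {ω : ℂ} {d : ℕ} (hω : IsPrimitiveRoot ω (2 * d + 1)) :
    ∑ j ∈ range (2 * d + 1), ‖rieszWeight ω d j‖ = d := by
  have hsum : ∑ j ∈ range (2 * d + 1), ((‖∑ p ∈ range d, (ω ^ j) ^ p‖ ^ 2 : ℝ) : ℂ) =
      (2 * d + 1 : ℕ) * d := by
    simpa only [zpow_zero, one_mul, zero_add, card_filter_dvd_fst_sub_snd] using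
      hω.sum_range_zpow_mul_norm_geom_sum_sq (by omega) d 0
  have hnorm (j : ℕ) :
      ‖rieszWeight ω d j‖ = ‖∑ p ∈ range d, (ω ^ j) ^ p‖ ^ 2 / (2 * d + 1 : ℕ) := by
    rw [rieszWeight, norm_div, norm_mul, norm_pow, norm_pow,
      Complex.norm_eq_one_of_pow_eq_one hω.pow_eq_one (by omega), one_pow, one_pow, one_mul,
      Complex.norm_natCast, Complex.norm_of_nonneg (by positivity)]
  rw [sum_congr rfl fun j _ => hnorm j, ← sum_div, div_eq_iff (by positivity)]
  exact_mod_cast hsum.trans (mul_comm _ _)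

lemma IsPrimitiveRoot.sum_rieszWeight_mul_pow {ω : ℂ} {d k : ℕ}
    (hω : IsPrimitiveRoot ω (2 * d + 1)) (hk : k ≤ d) :
    ∑ j ∈ range (2 * d + 1), rieszWeight ω d j * (ω ^ j) ^ k = k := by
  have h := hω.sum_range_zpow_mul_norm_geom_sum_sq (by omega) d (d + 1 + k : ℕ)
  rw [card_filter_dvd_add_fst_sub_snd hk] at h
  calc ∑ j ∈ range (2 * d + 1), rieszWeight ω d j * (ω ^ j) ^ k
      = (∑ j ∈ range (2 * d + 1), (ω ^ j) ^ ((d + 1 + k : ℕ) : ℤ) *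
          ((‖∑ p ∈ range d, (ω ^ j) ^ p‖ ^ 2 : ℝ) : ℂ)) / (2 * d + 1 : ℕ) := by
        rw [sum_div]
        refine sum_congr rfl fun j _ => ?_
        rw [rieszWeight, zpow_natCast, pow_add]
        ring
    _ = k := by rw [h, mul_div_cancel_left₀ _ (Nat.cast_ne_zero.mpr (by omega))]

theorem norm_sum_pow_mul_natCast_mul_le {A : Type*} [NormedRing A] (φ : ℂ →+* A)
    (hφ : ∀ z, ‖φ z‖ ≤ ‖z‖) (d : ℕ) (a : ℕ → A) (M : ℝ)
    (hM : ∀ z : ℂ, ‖z‖ = 1 → ‖∑ k ∈ range (d + 1), φ z ^ k * a k‖ ≤ M)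
    {z : ℂ} (hz : ‖z‖ = 1) :
    ‖∑ k ∈ range (d + 1), φ z ^ k * ((k : A) * a k)‖ ≤ d * M := by
  obtain ⟨ω, hω⟩ : ∃ ω : ℂ, IsPrimitiveRoot ω (2 * d + 1) :=
    ⟨_, Complex.isPrimitiveRoot_exp _ (by omega)⟩
  set P : ℂ → A := fun y => ∑ k ∈ range (d + 1), φ y ^ k * a k
  have hinterp : ∑ k ∈ range (d + 1), φ z ^ k * ((k : A) * a k) =
      ∑ j ∈ range (2 * d + 1), φ (rieszWeight ω d j) * P (z * ω ^ j) := by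
    simp_rw [P, mul_sum, ← map_pow, ← mul_assoc, ← map_mul]
    rw [sum_comm]
    refine sum_congr rfl fun k hk => ?_
    have hweights : ∑ j ∈ range (2 * d + 1), rieszWeight ω d j * (z * ω ^ j) ^ k = z ^ k * k := by
      simp_rw [mul_pow, mul_left_comm _ (z ^ k), ← mul_sum,
        hω.sum_rieszWeight_mul_pow (Nat.lt_succ_iff.mp (mem_range.mp hk))]
    rw [← sum_mul, ← map_sum, hweights, map_mul, map_natCast]
  calc ‖∑ k ∈ range (d + 1), φ z ^ k * ((k : A) * a k)‖
      ≤ ∑ j ∈ range (2 * d + 1), ‖φ (rieszWeight ω d j)‖ * ‖P (z * ω ^ j)‖ := by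
        rw [hinterp]
        exact (norm_sum_le _ _).trans (sum_le_sum fun j _ => norm_mul_le _ _)
    _ ≤ ∑ j ∈ range (2 * d + 1), ‖rieszWeight ω d j‖ * M := by
        refine sum_le_sum fun j _ => mul_le_mul (hφ _) (hM _ ?_) (norm_nonneg _) (norm_nonneg _)
        rw [norm_mul, norm_pow, hz, Complex.norm_eq_one_of_pow_eq_one hω.pow_eq_one (by omega),
          one_pow, one_mul]
    _ = d * M := by rw [← sum_mul, hω.sum_norm_rieszWeight]

lemma mul_sum_range_pow_mul_succ_mul {R : Type*} [Semiring R] (x : R) (a : ℕ → R) (d : ℕ) :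
    x * ∑ k ∈ range d, x ^ k * (((k + 1 : ℕ) : R) * a (k + 1)) =
      ∑ k ∈ range (d + 1), x ^ k * ((k : R) * a k) := by
  rw [sum_range_succ', mul_sum]
  simp [pow_succ', mul_assoc]

lemma Quaternion.exists_unit_pure_smul_eq_im (x : Quaternion ℝ) :
    ∃ I : Quaternion ℝ, I.re = 0 ∧ ‖I‖ = 1 ∧ ‖x.im‖ • I = x.im := by
  by_cases hx : x.im = 0
  · refine ⟨((Complex.I : ℂ) : Quaternion ℝ), by simp, ?_, by rw [hx, norm_zero, zero_smul]⟩
    rw [norm_eq_sqrt_real_inner, Quaternion.inner_self, Quaternion.normSq_def']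
    simp
  · refine ⟨‖x.im‖⁻¹ • x.im, by simp, ?_, smul_inv_smul₀ (norm_ne_zero_iff.mpr hx) _⟩
    rw [norm_smul, norm_inv, norm_norm, inv_mul_cancel₀ (norm_ne_zero_iff.mpr hx)]

lemma Quaternion.mul_self_eq_neg_one {I : Quaternion ℝ} (hre : I.re = 0) (hI : ‖I‖ = 1) :
    I * I = -1 := by
  have h := Quaternion.self_mul_star I
  rw [Quaternion.star_eq_neg.mpr hre, Quaternion.normSq_eq_norm_mul_self, hI, mul_neg] at h
  rw [← neg_neg (I * I), h]
  simp

lemma Quaternion.norm_liftAux {I : Quaternion ℝ} (hre : I.re = 0) (hI : ‖I‖ = 1) (z : ℂ) :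
    ‖Complex.liftAux I (Quaternion.mul_self_eq_neg_one hre hI) z‖ = ‖z‖ := by
  set φ := Complex.liftAux I (Quaternion.mul_self_eq_neg_one hre hI)
  have hstar : star (φ z) = φ (starRingEnd ℂ z) := by
    simp [φ, Complex.liftAux_apply, Quaternion.star_eq_neg.mpr hre]
  have h : ((Quaternion.normSq (φ z) : ℝ) : Quaternion ℝ) = ((‖z‖ ^ 2 : ℝ) : Quaternion ℝ) := by
    rw [← Quaternion.self_mul_star (φ z), hstar, ← map_mul φ, Complex.mul_conj',
      ← Complex.ofReal_pow]
    exact φ.commutes _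
  rw [Quaternion.coe_inj, Quaternion.normSq_eq_norm_mul_self, ← sq] at h
  exact (sq_eq_sq₀ (norm_nonneg _) (norm_nonneg _)).mp h

lemma Quaternion.exists_complex_isometry_mem_range (x : Quaternion ℝ) :
    ∃ φ : ℂ →ₐ[ℝ] Quaternion ℝ, (∀ z, ‖φ z‖ = ‖z‖) ∧ x ∈ Set.range φ := by
  obtain ⟨I, hre, hI, hxI⟩ := x.exists_unit_pure_smul_eq_im
  refine ⟨_, Quaternion.norm_liftAux hre hI, ⟨x.re, ‖x.im‖⟩, ?_⟩
  rw [Complex.liftAux_apply, hxI, Quaternion.algebraMap_def]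
  exact x.re_add_im

theorem quaternionic_bernstein_inequality_general
    (d : ℕ) (a : ℕ → Quaternion ℝ) (M : ℝ)
    (hM : ∀ x : Quaternion ℝ, ‖x‖ = 1 →
      ‖∑ k ∈ Finset.range (d + 1), x ^ k * a k‖ ≤ M) :
    ∀ x : Quaternion ℝ, ‖x‖ = 1 →
      ‖∑ k ∈ Finset.range d, x ^ k * (((k + 1 : ℕ) : Quaternion ℝ) * a (k + 1))‖ ≤ d * M := by
  intro x hx
  obtain ⟨φ, hφ, z, rfl⟩ := x.exists_complex_isometry_mem_range
  calc ‖∑ k ∈ range d, φ z ^ k * (((k + 1 : ℕ) : Quaternion ℝ) * a (k + 1))‖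
      = ‖∑ k ∈ range (d + 1), φ z ^ k * ((k : Quaternion ℝ) * a k)‖ := by
        rw [← mul_sum_range_pow_mul_succ_mul, norm_mul, hx, one_mul]
    _ ≤ d * M := norm_sum_pow_mul_natCast_mul_le (φ : ℂ →+* Quaternion ℝ) (fun w => (hφ w).le) d a M
        (fun w hw => hM _ ((hφ w).trans hw)) ((hφ z).symm.trans hx)

/-- **Quaternionic Bernstein inequality.**
If `P(X) = Σ_{k=0}^d X^k a_k` is a quaternionic polynomial of degree `d ≥ 1`
(coefficients on the right) with `‖P(x)‖ ≤ M` whenever `‖x‖ = 1`, then its formal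
derivative `P'(X) = Σ_{k=1}^d X^(k-1) (k a_k)` satisfies `‖P'(x)‖ ≤ d * M` for `‖x‖ = 1`. -/
theorem quaternionic_bernstein_inequality
    (d : ℕ) (hd : 1 ≤ d) (a : ℕ → Quaternion ℝ) (had : a d ≠ 0) (M : ℝ)
    (hM : ∀ x : Quaternion ℝ, ‖x‖ = 1 →
      ‖∑ k ∈ Finset.range (d + 1), x ^ k * a k‖ ≤ M) :
    ∀ x : Quaternion ℝ, ‖x‖ = 1 →
      ‖∑ k ∈ Finset.range d, x ^ k * (((k + 1 : ℕ) : Quaternion ℝ) * a (k + 1))‖ ≤ d * M :=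
  quaternionic_bernstein_inequality_general d a M hM
end

section
/- Let P(X) = Σ_{k=0}^d X^k a_k be a quaternionic polynomial of degree d ≥ 1, let M = max_{|x|=1} |P(x)|, and suppose there exists y ∈ ℍ with |y| = 1 such that |P'(y)| = d·M. Then P(X) = X^d a for some quaternion a with |a| = M, i.e., a_k = 0 for all 0 ≤ k ≤ d−1. -/
/-!
Choose an `ℝ`-algebra embedding `ι : ℂ → ℍ` whose image contains `y`. On the circle of that slice,
`s θ = e^{-idθ} P(y e^{iθ})` is a trigonometric polynomial with right coefficients `y^k a_k` at the
frequencies `k - d`, and `‖s‖ ≤ M`. Integrating against the Fejér kernel `K = |∑_{j<d} e^{ijθ}|²`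
(with `∫ K = 2πd`) gives `∫ K s = 2π y P'(y)`, whose norm is `2πdM = M ∫ K`. Equality in
`‖∫ K s‖ ≤ ∫ K ‖s‖ ≤ M ∫ K` forces `s` to be constant wherever `K ≠ 0`, i.e. almost everywhere, so
every nonconstant Fourier coefficient `y^k a_k` (`k < d`) of `s` vanishes.
-/

open Complex ComplexConjugate Finset MeasureTheory
open scoped Real RealInnerProductSpace Quaternion

theorem integral_exp_int_mul_I (n : ℤ) :
    ∫ θ in (0 : ℝ)..2 * π, cexp (n * θ * I) = if n = 0 then ((2 * π : ℝ) : ℂ) else 0 := by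
  split_ifs with hn
  · simp [hn]
  · have hc : (n : ℂ) * I ≠ 0 := mul_ne_zero (Int.cast_ne_zero.mpr hn) I_ne_zero
    simp_rw [mul_right_comm _ _ I]
    rw [integral_exp_mul_complex hc]
    have hperiod : (n : ℂ) * I * ((2 * π : ℝ) : ℂ) = n * (2 * π * I) := by push_cast; ring
    rw [hperiod, exp_int_mul_two_pi_mul_I]
    simp

theorem card_filter_add_eq_add {k d : ℕ} (hk : k ≤ d) :
    #{p ∈ range d ×ˢ range d | p.1 + k = p.2 + d} = k := by
  have : {p ∈ range d ×ˢ range d | p.1 + k = p.2 + d} =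
      (range k).image fun l => (l + (d - k), l) := by
    ext ⟨j, l⟩
    simp only [mem_filter, mem_product, mem_range, mem_image, Prod.ext_iff]
    constructor
    · rintro ⟨⟨hj, hl⟩, h⟩; exact ⟨l, by omega, by omega, rfl⟩
    · rintro ⟨l', hl', rfl, rfl⟩; omega
  rw [this, card_image_of_injective _ fun l l' h => (Prod.ext_iff.mp h).2, card_range]

/-- `d` times the Fejér kernel `F_d`. -/
noncomputable def fejerKernel (d : ℕ) (θ : ℝ) : ℝ := ‖∑ j ∈ range d, cexp (j * θ * I)‖ ^ 2

theorem ofReal_fejerKernel (d : ℕ) (θ : ℝ) :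
    (fejerKernel d θ : ℂ) = ∑ j ∈ range d, ∑ l ∈ range d, cexp ((j - l : ℂ) * θ * I) := by
  rw [fejerKernel, ofReal_pow, ← mul_conj', map_sum, sum_mul_sum]
  refine sum_congr rfl fun j _ => sum_congr rfl fun l _ => ?_
  rw [← exp_conj, ← exp_add]
  congr 1
  simp only [map_mul, conj_ofReal, conj_natCast, conj_I]
  ring

theorem fejerKernel_nonneg (d : ℕ) (θ : ℝ) : 0 ≤ fejerKernel d θ := by
  unfold fejerKernel; positivity

theorem continuous_fejerKernel (d : ℕ) : Continuous (fejerKernel d) := by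
  unfold fejerKernel; fun_prop

theorem integral_fejerKernel_mul_exp {d k : ℕ} (hk : k ≤ d) :
    ∫ θ in (0 : ℝ)..2 * π, (fejerKernel d θ : ℂ) * cexp ((k - d : ℂ) * θ * I) =
      ((2 * π * k : ℝ) : ℂ) := by
  have hexp : ∀ θ : ℝ, (fejerKernel d θ : ℂ) * cexp ((k - d : ℂ) * θ * I) =
      ∑ p ∈ range d ×ˢ range d, cexp (((p.1 - p.2 + k - d : ℤ) : ℂ) * θ * I) := by
    intro θ
    rw [ofReal_fejerKernel, sum_mul, sum_product]
    refine sum_congr rfl fun j _ => ?_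
    rw [sum_mul]
    refine sum_congr rfl fun l _ => ?_
    rw [← exp_add]
    push_cast
    ring_nf
  simp_rw [hexp]
  rw [intervalIntegral.integral_finsetSum fun p _ =>
    (by fun_prop : Continuous _).intervalIntegrable _ _]
  simp_rw [integral_exp_int_mul_I]
  have hfreq (p : ℕ × ℕ) : (p.1 - p.2 + k - d : ℤ) = 0 ↔ p.1 + k = p.2 + d := by omega
  simp_rw [hfreq]
  rw [← sum_filter, sum_const, card_filter_add_eq_add hk, nsmul_eq_mul]
  push_cast
  ring

theorem integral_fejerKernel (d : ℕ) : ∫ θ in (0 : ℝ)..2 * π, fejerKernel d θ = 2 * π * d := by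
  have h := integral_fejerKernel_mul_exp (le_refl d)
  simp only [sub_self, zero_mul, Complex.exp_zero, mul_one, intervalIntegral.integral_ofReal] at h
  exact_mod_cast h

theorem exists_int_eq_of_fejerKernel_eq_zero {d : ℕ} (hd : d ≠ 0) {θ : ℝ}
    (h : fejerKernel d θ = 0) : ∃ n : ℤ, θ = n * (2 * π) / d := by
  have hg : ∑ j ∈ range d, cexp (θ * I) ^ j = 0 := by
    simpa [fejerKernel, ← exp_nat_mul, mul_assoc] using h
  have hpow : cexp (d * θ * I) = 1 := by
    rw [mul_assoc, exp_nat_mul, ← sub_eq_zero, ← geom_sum_mul, hg, zero_mul]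
  obtain ⟨n, hn⟩ := exp_eq_one_iff.mp hpow
  refine ⟨n, ?_⟩
  have hn' : ((d * θ : ℝ) : ℂ) = ((n * (2 * π) : ℝ) : ℂ) := by
    apply mul_right_cancel₀ I_ne_zero
    push_cast; rw [hn]; ring
  rw [eq_div_iff (by exact_mod_cast hd)]
  linarith [ofReal_injective hn']

theorem ae_fejerKernel_ne_zero {d : ℕ} (hd : d ≠ 0) : ∀ᵐ θ, fejerKernel d θ ≠ 0 := by
  refine measure_mono_null (fun θ hθ => ?_)
    ((Set.countable_range fun n : ℤ => n * (2 * π) / d).measure_zero volume)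
  obtain ⟨n, hn⟩ := exists_int_eq_of_fejerKernel_eq_zero hd (not_not.mp hθ)
  exact ⟨n, hn.symm⟩

section InnerProduct

variable {E : Type*} [NormedAddCommGroup E] [InnerProductSpace ℝ E]

theorem eq_smul_of_inner_eq_norm_mul_of_norm_le {u v : E} {M : ℝ} (hu : u ≠ 0) (hv : ‖v‖ ≤ M)
    (h : ⟪u, v⟫ = ‖u‖ * M) : v = (M / ‖u‖) • u := by
  have hu' : 0 < ‖u‖ := norm_pos_iff.mpr hu
  have hvM : ‖v‖ = M := le_antisymm hv <|
    le_of_mul_le_mul_left (h ▸ real_inner_le_norm u v) hu'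
  have := inner_eq_norm_mul_iff_real.mp (hvM ▸ h)
  rw [hvM] at this
  rw [div_eq_inv_mul, mul_smul, this, inv_smul_smul₀ hu'.ne']

variable [CompleteSpace E]

theorem exists_ae_eq_of_norm_integral_smul_eq {K : ℝ → ℝ} {f : ℝ → E} {a b M : ℝ} (hab : a ≤ b)
    (hK : Continuous K) (hK0 : ∀ θ, 0 ≤ K θ) (hf : Continuous f) (hfM : ∀ θ, ‖f θ‖ ≤ M)
    (heq : ‖∫ θ in a..b, K θ • f θ‖ = M * ∫ θ in a..b, K θ) :
    ∃ w, ∀ᵐ θ ∂volume.restrict (Set.Ioc a b), K θ ≠ 0 → f θ = w := by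
  set J := ∫ θ in a..b, K θ • f θ
  by_cases hJ : J = 0
  · rw [hJ, norm_zero, eq_comm, mul_eq_zero] at heq
    rcases heq with hM | hKint
    · exact ⟨0, ae_of_all _ fun θ _ => norm_le_zero_iff.mp (hM ▸ hfM θ)⟩
    · have hK_ae := (intervalIntegral.integral_eq_zero_iff_of_le_of_nonneg_ae hab
        (ae_of_all _ hK0) (hK.intervalIntegrable a b)).mp hKint
      exact ⟨0, hK_ae.mono fun θ hθ hθ' => absurd hθ hθ'⟩
  refine ⟨(M / ‖J‖) • J, ?_⟩
  set φ : ℝ → ℝ := fun θ => K θ * (‖J‖ * M - ⟪J, f θ⟫)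
  have hφ0 : ∀ θ, 0 ≤ φ θ := fun θ => mul_nonneg (hK0 θ) <| sub_nonneg.mpr <|
    (real_inner_le_norm J (f θ)).trans (mul_le_mul_of_nonneg_left (hfM θ) (norm_nonneg J))
  have hφ : ∫ θ in a..b, φ θ = 0 := by
    have hinner : ∫ θ in a..b, ⟪J, K θ • f θ⟫ = ⟪J, J⟫ :=
      (innerSL ℝ J).intervalIntegral_comp_comm ((hK.smul hf).intervalIntegrable a b)
    simp only [φ, mul_sub, ← real_inner_smul_right]
    rw [intervalIntegral.integral_sub (f := fun θ => K θ * (‖J‖ * M))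
      (g := fun θ => ⟪J, K θ • f θ⟫) ((hK.mul continuous_const).intervalIntegrable a b)
      ((continuous_const.inner (hK.smul hf)).intervalIntegrable a b), hinner,
      intervalIntegral.integral_mul_const, mul_comm, mul_assoc, ← heq,
      real_inner_self_eq_norm_mul_norm, sub_self]
  have hφ_ae := (intervalIntegral.integral_eq_zero_iff_of_le_of_nonneg_ae hab (ae_of_all _ hφ0)
    ((hK.mul (continuous_const.sub (continuous_const.inner hf))).intervalIntegrable a b)).mp hφ
  filter_upwards [hφ_ae] with θ hθ hKθ
  refine eq_smul_of_inner_eq_norm_mul_of_norm_le hJ (hfM θ) ?_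
  have := (mul_eq_zero.mp hθ).resolve_left hKθ
  linarith

end InnerProduct

section Slice

variable {A : Type*} [NormedRing A] [NormedAlgebra ℝ A]

theorem AlgHom.continuous_of_complex (ι : ℂ →ₐ[ℝ] A) : Continuous ι :=
  ι.toLinearMap.continuous_of_finiteDimensional

theorem intervalIntegral.integral_algHom_complex_mul [CompleteSpace A] (ι : ℂ →ₐ[ℝ] A)
    {f : ℝ → ℂ} (hf : Continuous f) (c : A) {a b : ℝ} :
    ∫ θ in a..b, ι (f θ) * c = ι (∫ θ in a..b, f θ) * c :=
  (LinearMap.mulRight ℝ c ∘ₗ ι.toLinearMap).toContinuousLinearMap.intervalIntegral_comp_comm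
    (hf.intervalIntegrable a b)

theorem intervalIntegral.integral_finsetSum_algHom_complex_mul [CompleteSpace A]
    (ι : ℂ →ₐ[ℝ] A) {κ : Type*} (s : Finset κ) {f : κ → ℝ → ℂ} (hf : ∀ k ∈ s, Continuous (f k))
    (c : κ → A) {a b : ℝ} :
    ∫ θ in a..b, ∑ k ∈ s, ι (f k θ) * c k = ∑ k ∈ s, ι (∫ θ in a..b, f k θ) * c k := by
  have hcont := ι.continuous_of_complex
  rw [intervalIntegral.integral_finsetSum (f := fun k θ => ι (f k θ) * c k) fun k hk =>
    ((hcont.comp (hf k hk)).mul continuous_const).intervalIntegrable a b]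
  exact sum_congr rfl fun k hk => integral_algHom_complex_mul ι (hf k hk) (c k)

noncomputable def sliceTrigPoly (ι : ℂ →ₐ[ℝ] A) (d : ℕ) (c : ℕ → A) (θ : ℝ) : A :=
  ∑ k ∈ range (d + 1), ι (cexp ((k - d : ℂ) * θ * I)) * c k

variable (ι : ℂ →ₐ[ℝ] A) (d : ℕ) (c : ℕ → A)

theorem continuous_sliceTrigPoly : Continuous (sliceTrigPoly ι d c) := by
  unfold sliceTrigPoly
  have := ι.continuous_of_complex
  fun_prop

theorem sliceTrigPoly_eq (z : ℂ) (a : ℕ → A) (θ : ℝ) :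
    sliceTrigPoly ι d (fun k => ι z ^ k * a k) θ =
      ι (cexp (-(d * θ * I))) * ∑ k ∈ range (d + 1), (ι z * ι (cexp (θ * I))) ^ k * a k := by
  rw [sliceTrigPoly, mul_sum]
  refine sum_congr rfl fun k _ => ?_
  rw [← map_mul, ← map_pow, ← mul_assoc, ← map_pow, ← map_mul, ← mul_assoc, ← map_mul, mul_pow,
    ← exp_nat_mul, mul_left_comm, ← exp_add]
  ring_nf

variable [CompleteSpace A]

theorem integral_exp_mul_sliceTrigPoly {m : ℕ} (hm : m ≤ d) :
    ∫ θ in (0 : ℝ)..2 * π, ι (cexp ((d - m : ℂ) * θ * I)) * sliceTrigPoly ι d c θ =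
      (2 * π) • c m := by
  have hexp : ∀ θ : ℝ, ι (cexp ((d - m : ℂ) * θ * I)) * sliceTrigPoly ι d c θ =
      ∑ k ∈ range (d + 1), ι (cexp (((k - m : ℤ) : ℂ) * θ * I)) * c k := by
    intro θ
    rw [sliceTrigPoly, mul_sum]
    refine sum_congr rfl fun k _ => ?_
    rw [← mul_assoc, ← map_mul, ← exp_add]
    push_cast
    ring_nf
  simp_rw [hexp]
  rw [intervalIntegral.integral_finsetSum_algHom_complex_mul ι _ (fun k _ => by fun_prop)]
  simp_rw [integral_exp_int_mul_I, sub_eq_zero, Int.natCast_inj, apply_ite ι, ite_mul, map_zero,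
    zero_mul]
  rw [sum_ite_eq', if_pos (mem_range.mpr (by omega)), ← Complex.coe_algebraMap, ι.commutes,
    Algebra.smul_def]

theorem integral_fejerKernel_smul_sliceTrigPoly :
    ∫ θ in (0 : ℝ)..2 * π, fejerKernel d θ • sliceTrigPoly ι d c θ =
      (2 * π) • ∑ k ∈ range (d + 1), k • c k := by
  have hexp : ∀ θ : ℝ, fejerKernel d θ • sliceTrigPoly ι d c θ =
      ∑ k ∈ range (d + 1), ι ((fejerKernel d θ : ℂ) * cexp ((k - d : ℂ) * θ * I)) * c k := by
    intro θ
    rw [sliceTrigPoly, smul_sum]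
    refine sum_congr rfl fun k _ => ?_
    rw [← smul_mul_assoc, ← map_smul, Complex.real_smul]
  have hK := continuous_fejerKernel d
  simp_rw [hexp]
  rw [intervalIntegral.integral_finsetSum_algHom_complex_mul ι _ (fun k _ => by fun_prop),
    smul_sum]
  refine sum_congr rfl fun k hk => ?_
  rw [integral_fejerKernel_mul_exp (Nat.lt_succ_iff.mp (mem_range.mp hk)),
    ← Complex.coe_algebraMap, ι.commutes, ← Algebra.smul_def, mul_smul, Nat.cast_smul_eq_nsmul]

theorem coeff_eq_zero_of_ae_eq_sliceTrigPoly {w : A}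
    (hw : ∀ᵐ θ ∂volume.restrict (Set.Ioc 0 (2 * π)), sliceTrigPoly ι d c θ = w) {m : ℕ}
    (hm : m < d) : c m = 0 := by
  have hw' : ∀ᵐ θ, θ ∈ Set.uIoc 0 (2 * π) → sliceTrigPoly ι d c θ = w := by
    rwa [Set.uIoc_of_le (by positivity), ← ae_restrict_iff' measurableSet_Ioc]
  have hfreq : ((d - m : ℤ) : ℂ) = (d - m : ℂ) := by push_cast; rfl
  have hcoeff := integral_exp_mul_sliceTrigPoly ι d c hm.le
  rw [intervalIntegral.integral_congr_ae (hw'.mono fun θ h hθ => by rw [h hθ]),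
    intervalIntegral.integral_algHom_complex_mul ι (by fun_prop), ← hfreq, integral_exp_int_mul_I,
    if_neg (by omega), map_zero, zero_mul, eq_comm, smul_eq_zero] at hcoeff
  exact hcoeff.resolve_left (by positivity)

end Slice

theorem AlgHom.map_complex_eq {A : Type*} [Ring A] [Algebra ℝ A] (ι : ℂ →ₐ[ℝ] A) (w : ℂ) :
    ι w = algebraMap ℝ A w.re + w.im • ι I := by
  conv_lhs => rw [← re_add_im w]
  rw [map_add, ← Complex.real_smul, map_smul, ← Complex.coe_algebraMap, ι.commutes]

theorem Quaternion.re_eq_zero_of_mul_self_eq_neg_one {q : ℍ} (h : q * q = -1) : q.re = 0 := by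
  have hre := congrArg QuaternionAlgebra.re h
  have hi := congrArg QuaternionAlgebra.imI h
  have hj := congrArg QuaternionAlgebra.imJ h
  have hk := congrArg QuaternionAlgebra.imK h
  simp only [Quaternion.re_mul, Quaternion.imI_mul, Quaternion.imJ_mul, Quaternion.imK_mul,
    Quaternion.re_neg, Quaternion.imI_neg, Quaternion.imJ_neg, Quaternion.imK_neg,
    Quaternion.re_one, Quaternion.imI_one, Quaternion.imJ_one, Quaternion.imK_one] at hre hi hj hk
  nlinarith [sq_nonneg q.re, sq_nonneg q.imI, sq_nonneg q.imJ, sq_nonneg q.imK]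

theorem AlgHom.norm_map_complex_quaternion (ι : ℂ →ₐ[ℝ] ℍ) (z : ℂ) : ‖ι z‖ = ‖z‖ := by
  have hI : ι I * ι I = -1 := by rw [← map_mul, I_mul_I, map_neg, map_one]
  have hstarI : star (ι I) = -ι I :=
    Quaternion.star_eq_neg.mpr (Quaternion.re_eq_zero_of_mul_self_eq_neg_one hI)
  have hstar : star (ι z) = ι (conj z) := by
    rw [ι.map_complex_eq z, ι.map_complex_eq (conj z), star_add, Quaternion.star_smul, hstarI,
      conj_re, conj_im, Quaternion.algebraMap_def, Quaternion.star_coe, smul_neg, neg_smul]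
  have hsq : ((Quaternion.normSq (ι z) : ℝ) : ℍ) = ((Complex.normSq z : ℝ) : ℍ) := by
    rw [← Quaternion.self_mul_star, hstar, ← map_mul, Complex.mul_conj, ← Complex.coe_algebraMap,
      ι.commutes]
    rfl
  have := Quaternion.coe_injective hsq
  rw [Quaternion.normSq_eq_norm_mul_self, Complex.normSq_eq_norm_sq] at this
  nlinarith [norm_nonneg (ι z), norm_nonneg z]

theorem Quaternion.exists_algHom_complex_apply_eq (y : ℍ) :
    ∃ (ι : ℂ →ₐ[ℝ] ℍ) (z : ℂ), ι z = y := by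
  by_cases hy : y.im = 0
  · refine ⟨Quaternion.ofComplex, y.re, ?_⟩
    rw [Quaternion.coe_ofComplex, Quaternion.coeComplex_coe, ← Quaternion.re_add_im y, hy,
      add_zero]
    simp
  · set r := ‖y.im‖
    have hr : r ≠ 0 := norm_ne_zero_iff.mpr hy
    have hI : (r⁻¹ • y.im) * (r⁻¹ • y.im) = -1 := by
      rw [smul_mul_smul_comm, ← pow_two y.im, Quaternion.im_sq,
        Quaternion.normSq_eq_norm_mul_self, smul_neg, Quaternion.smul_coe, ← mul_inv,
        inv_mul_cancel₀ (mul_ne_zero hr hr)]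
      rfl
    refine ⟨Complex.liftAux _ hI, y.re + r * I, ?_⟩
    rw [Complex.liftAux_apply]
    simp [hr]

theorem norm_sliceTrigPoly_le (ι : ℂ →ₐ[ℝ] ℍ) {z : ℂ} (hz : ‖ι z‖ = 1) {d : ℕ} {a : ℕ → ℍ}
    {M : ℝ} (hM : ∀ x : ℍ, ‖x‖ = 1 → ‖∑ k ∈ range (d + 1), x ^ k * a k‖ ≤ M) (θ : ℝ) :
    ‖sliceTrigPoly ι d (fun k => ι z ^ k * a k) θ‖ ≤ M := by
  have hunit : ‖cexp (-(d * θ * I))‖ = 1 := by simp [norm_exp]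
  rw [sliceTrigPoly_eq, norm_mul, ι.norm_map_complex_quaternion, hunit, one_mul]
  exact hM _ (by rw [norm_mul, hz, ι.norm_map_complex_quaternion, norm_exp_ofReal_mul_I, one_mul])

theorem sum_range_succ_nsmul_pow_mul {R : Type*} [Semiring R] (x : R) (a : ℕ → R) (d : ℕ) :
    ∑ k ∈ range (d + 1), k • (x ^ k * a k) =
      x * ∑ k ∈ range d, x ^ k * (((k + 1 : ℕ) : R) * a (k + 1)) := by
  rw [sum_range_succ', zero_smul, add_zero, mul_sum]
  refine sum_congr rfl fun k _ => ?_
  rw [nsmul_eq_mul, pow_succ', mul_assoc x, (Nat.cast_commute (k + 1) x).left_comm,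
    (Nat.cast_commute (k + 1) (x ^ k)).left_comm]

theorem quaternionic_bernstein_equality_general
    (d : ℕ) (a : ℕ → Quaternion ℝ) (M : ℝ)
    (hM₁ : ∀ x : Quaternion ℝ, ‖x‖ = 1 →
      ‖∑ k ∈ Finset.range (d + 1), x ^ k * a k‖ ≤ M)
    (hM₂ : ∃ x : Quaternion ℝ, ‖x‖ = 1 ∧
      ‖∑ k ∈ Finset.range (d + 1), x ^ k * a k‖ = M)
    (y : Quaternion ℝ) (hy : ‖y‖ = 1)
    (hPy : ‖∑ k ∈ Finset.range d, y ^ k * (((k + 1 : ℕ) : Quaternion ℝ) * a (k + 1))‖ = d * M) :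
    (∀ k < d, a k = 0) ∧ ‖a d‖ = M := by
  obtain ⟨ι, z, rfl⟩ := Quaternion.exists_algHom_complex_apply_eq y
  set s := sliceTrigPoly ι d fun k => ι z ^ k * a k
  have hKs : ‖∫ θ in (0 : ℝ)..2 * π, fejerKernel d θ • s θ‖ =
      M * ∫ θ in (0 : ℝ)..2 * π, fejerKernel d θ := by
    rw [integral_fejerKernel_smul_sliceTrigPoly, sum_range_succ_nsmul_pow_mul, norm_smul,
      Real.norm_of_nonneg (by positivity), norm_mul, hy, one_mul, hPy, integral_fejerKernel]
    ring
  obtain ⟨w, hw⟩ := exists_ae_eq_of_norm_integral_smul_eq (by positivity)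
    (continuous_fejerKernel d) (fejerKernel_nonneg d)
    (continuous_sliceTrigPoly ι d _) (norm_sliceTrigPoly_le ι hy hM₁) hKs
  have hzero : ∀ k < d, a k = 0 := fun k hk => by
    have hsw : ∀ᵐ θ ∂volume.restrict (Set.Ioc 0 (2 * π)), s θ = w := by
      filter_upwards [hw, ae_restrict_of_ae (ae_fejerKernel_ne_zero (d := d) (by omega))]
        with θ h hK using h hK
    have hyk : ι z ^ k ≠ 0 := pow_ne_zero _ (by rintro h; simp [h] at hy)
    exact (mul_eq_zero.mp (coeff_eq_zero_of_ae_eq_sliceTrigPoly ι d _ hsw hk)).resolve_left hyk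
  refine ⟨hzero, ?_⟩
  obtain ⟨x, hx, hPx⟩ := hM₂
  rwa [sum_range_succ, sum_eq_zero fun k hk => by rw [hzero k (mem_range.mp hk), mul_zero],
    zero_add, norm_mul, norm_pow, hx, one_pow, one_mul] at hPx

/-- **Equality case in the quaternionic Bernstein inequality.**
If `P(X) = Σ_{k=0}^d X^k a_k` has degree `d ≥ 1`, `M = max_{‖x‖=1} ‖P(x)‖`, and
`‖P'(y)‖ = d * M` at some `y` with `‖y‖ = 1`, then `P(X) = X^d a` with `‖a‖ = M`,
i.e. `a_k = 0` for `k < d` and `‖a d‖ = M`. -/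
theorem quaternionic_bernstein_equality
    (d : ℕ) (hd : 1 ≤ d) (a : ℕ → Quaternion ℝ) (had : a d ≠ 0) (M : ℝ)
    (hM₁ : ∀ x : Quaternion ℝ, ‖x‖ = 1 →
      ‖∑ k ∈ Finset.range (d + 1), x ^ k * a k‖ ≤ M)
    (hM₂ : ∃ x : Quaternion ℝ, ‖x‖ = 1 ∧
      ‖∑ k ∈ Finset.range (d + 1), x ^ k * a k‖ = M)
    (y : Quaternion ℝ) (hy : ‖y‖ = 1)
    (hPy : ‖∑ k ∈ Finset.range d, y ^ k * (((k + 1 : ℕ) : Quaternion ℝ) * a (k + 1))‖ = d * M) :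
    (∀ k < d, a k = 0) ∧ ‖a d‖ = M :=
  quaternionic_bernstein_equality_general d a M hM₁ hM₂ y hy hPy
end

section
/- For quaternionic polynomials P, Q with product P·Q defined by convolution of right coefficients (X commuting with coefficients), if P(x) ≠ 0 then (P·Q)(x) = P(x) · Q(P(x)⁻¹ x P(x)), and if P(x) = 0 then (P·Q)(x) = 0. -/
/-!
Since powers of `x` commute with each other, the coefficient `x ^ (h + k) * a h * b k` of the
convolution can be regrouped as `x ^ k * (x ^ h * a h) * b k`, so `(P·Q)(x) = Σ_k x^k P(x) b_k`.
When `P(x) ≠ 0`, `(P(x)⁻¹ * x * P(x)) ^ k = P(x)⁻¹ * x ^ k * P(x)`, whence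
`x ^ k * P(x) = P(x) * (P(x)⁻¹ * x * P(x)) ^ k`.
-/

open Finset

namespace Finset

theorem sum_range_diag_flip_of_eq_zero {M : Type*} [AddCommMonoid M] (dP dQ : ℕ)
    (f : ℕ → ℕ → M) (hfP : ∀ h > dP, ∀ k, f h k = 0) (hfQ : ∀ k > dQ, ∀ h, f h k = 0) :
    ∑ m ∈ range (dP + dQ + 1), ∑ h ∈ range (m + 1), f h (m - h) =
      ∑ h ∈ range (dP + 1), ∑ k ∈ range (dQ + 1), f h k := by
  rw [sum_range_diag_flip]
  symm
  refine sum_subset_zero_on_sdiff (by gcongr; omega) ?_ fun h hh => ?_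
  · intro h hh
    simp only [mem_sdiff, mem_range] at hh
    exact sum_eq_zero fun k _ => hfP h (by omega) k
  · simp only [mem_range] at hh
    exact sum_subset (by gcongr; omega) fun k hk hk' => by
      simp only [mem_range] at hk hk'
      exact hfQ k (by omega) h

end Finset

theorem sum_range_pow_mul_convolution {R : Type*} [Semiring R] (dP dQ : ℕ) (a b : ℕ → R)
    (ha : ∀ h > dP, a h = 0) (hb : ∀ h > dQ, b h = 0) (x : R) :
    ∑ m ∈ range (dP + dQ + 1), x ^ m * ∑ h ∈ range (m + 1), a h * b (m - h) =
      ∑ k ∈ range (dQ + 1), x ^ k * (∑ h ∈ range (dP + 1), x ^ h * a h) * b k := by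
  have hterm : ∀ m, ∀ h ∈ range (m + 1),
      x ^ m * (a h * b (m - h)) = x ^ (m - h) * (x ^ h * a h) * b (m - h) := by
    intro m h hh
    rw [← pow_sub_mul_pow x (Nat.le_of_lt_succ (mem_range.mp hh))]
    simp only [mul_assoc]
  simp_rw [mul_sum, sum_congr rfl (hterm _)]
  rw [sum_range_diag_flip_of_eq_zero dP dQ (fun h k => x ^ k * (x ^ h * a h) * b k)
    (fun h hh k => by simp [ha h hh]) (fun k hk h => by simp [hb k hk]), sum_comm]
  simp_rw [← sum_mul]

theorem sum_pow_mul_mul_eq_mul_sum_conj_pow {K : Type*} [DivisionRing K] {p : K} (hp : p ≠ 0)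
    (x : K) (b : ℕ → K) (s : Finset ℕ) :
    ∑ k ∈ s, x ^ k * p * b k = p * ∑ k ∈ s, (p⁻¹ * x * p) ^ k * b k := by
  simp_rw [mul_sum, GroupWithZero.conj_pow₀ hp, mul_assoc, mul_inv_cancel_left₀ hp]

/-- **Evaluation of the ∗-product of quaternionic polynomials.**
Let `P(X) = Σ_{h=0}^{dP} X^h a_h` and `Q(X) = Σ_{h=0}^{dQ} X^h b_h` (coefficients on the
right, vanishing beyond the degree) and let `P·Q` be their convolution product, with
coefficients `c_m = Σ_{h+k=m} a_h b_k`.  If `P(x) ≠ 0` then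
`(P·Q)(x) = P(x) · Q(P(x)⁻¹ x P(x))`, and if `P(x) = 0` then `(P·Q)(x) = 0`. -/
theorem star_product_evaluation
    (dP dQ : ℕ) (a b : ℕ → Quaternion ℝ)
    (ha : ∀ h > dP, a h = 0) (hb : ∀ h > dQ, b h = 0)
    (x : Quaternion ℝ) :
    (((∑ h ∈ Finset.range (dP + 1), x ^ h * a h) ≠ 0 →
      (∑ m ∈ Finset.range (dP + dQ + 1),
          x ^ m * (∑ h ∈ Finset.range (m + 1), a h * b (m - h))) =
        (∑ h ∈ Finset.range (dP + 1), x ^ h * a h) *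
          (∑ h ∈ Finset.range (dQ + 1),
            ((∑ h ∈ Finset.range (dP + 1), x ^ h * a h)⁻¹ * x *
              (∑ h ∈ Finset.range (dP + 1), x ^ h * a h)) ^ h * b h)) ∧
    ((∑ h ∈ Finset.range (dP + 1), x ^ h * a h) = 0 →
      (∑ m ∈ Finset.range (dP + dQ + 1),
          x ^ m * (∑ h ∈ Finset.range (m + 1), a h * b (m - h))) = 0)) := by
  rw [sum_range_pow_mul_convolution dP dQ a b ha hb x]
  refine ⟨fun hP => sum_pow_mul_mul_eq_mul_sum_conj_pow hP x b _, fun hP => ?_⟩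
  simp [hP]
end

section
/- Let P(X) = (X−i)·(X−j)·(X−k) and Q(X) = 2X·(X−i)·(X−j) in ℍ[X] (products with right coefficients). Then |P(x)| ≤ |Q(x)| for every quaternion x with |x| = 1. -/
noncomputable def qi : Quaternion ℝ := ⟨0, 1, 0, 0⟩
noncomputable def qj : Quaternion ℝ := ⟨0, 0, 1, 0⟩
noncomputable def qk : Quaternion ℝ := ⟨0, 0, 0, 1⟩

/-!
Put `F = (X−i)(X−j)`, so `F(x) = x² − x(i+j) + k`, `P = F·(X−k)` and `Q = 2X·F`. With right
coefficients, `P(x) = x F(x) − F(x) k` and `Q(x) = 2 x F(x)`. For `|x| = |k| = 1` the triangle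
inequality bounds the first by `2|F(x)|`, and that is the modulus of the second.
-/

open Quaternion

lemma qi_mul_qk : qi * qk = -qj := by
  ext <;> simp [re_mul, imI_mul, imJ_mul, imK_mul] <;> simp [qi, qj, qk]

lemma qj_mul_qk : qj * qk = qi := by
  ext <;> simp [re_mul, imI_mul, imJ_mul, imK_mul] <;> simp [qi, qj, qk]

lemma qk_mul_qk : qk * qk = -1 := by
  ext <;> simp [re_mul, imI_mul, imJ_mul, imK_mul] <;> simp [qk]

lemma norm_qk : ‖qk‖ = 1 := by
  rw [norm_eq_sqrt_real_inner, inner_self, normSq_def']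
  simp [qk]

lemma norm_mul_sub_mul_le {R : Type*} [NonUnitalSeminormedRing R] (x r c : R) :
    ‖x * r - r * c‖ ≤ (‖x‖ + ‖c‖) * ‖r‖ :=
  calc ‖x * r - r * c‖ ≤ ‖x * r‖ + ‖r * c‖ := norm_sub_le _ _
    _ ≤ ‖x‖ * ‖r‖ + ‖r‖ * ‖c‖ := add_le_add (norm_mul_le _ _) (norm_mul_le _ _)
    _ = (‖x‖ + ‖c‖) * ‖r‖ := by ring

lemma cubic_ijk_eq_mul_sub_mul (x : Quaternion ℝ) :
    x ^ 3 - x ^ 2 * (qi + qj + qk) + x * (qi - qj + qk) + 1 =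
      x * (x ^ 2 - x * (qi + qj) + qk) - (x ^ 2 - x * (qi + qj) + qk) * qk := by
  simp only [sub_mul, add_mul, mul_assoc, qi_mul_qk, qj_mul_qk, qk_mul_qk]
  noncomm_ring

lemma cubic_ij_eq_two_mul (x : Quaternion ℝ) :
    x ^ 3 * 2 - x ^ 2 * (2 * (qi + qj)) + x * (2 * qk) =
      2 * (x * (x ^ 2 - x * (qi + qj) + qk)) := by
  noncomm_ring

/-- For `P(X) = (X−i)·(X−j)·(X−k) = X³ − X²(i+j+k) + X(i−j+k) + 1` and
`Q(X) = 2X·(X−i)·(X−j) = 2X³ − 2X²(i+j) + 2Xk`, one has `|P(x)| ≤ |Q(x)|`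
for every quaternion `x` with `|x| = 1`. -/
theorem counterexample_modulus_comparison :
    ∀ x : Quaternion ℝ, ‖x‖ = 1 →
      ‖x ^ 3 - x ^ 2 * (qi + qj + qk) + x * (qi - qj + qk) + 1‖ ≤
      ‖x ^ 3 * 2 - x ^ 2 * (2 * (qi + qj)) + x * (2 * qk)‖ := by
  intro x hx
  have norm_two : ‖(2 : Quaternion ℝ)‖ = 2 := (norm_coe 2).trans Real.norm_two
  rw [cubic_ijk_eq_mul_sub_mul, cubic_ij_eq_two_mul, norm_mul, norm_mul, hx, one_mul, norm_two]
  calc _ ≤ (‖x‖ + ‖qk‖) * ‖x ^ 2 - x * (qi + qj) + qk‖ := norm_mul_sub_mul_le _ _ _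
    _ = 2 * ‖x ^ 2 - x * (qi + qj) + qk‖ := by rw [hx, norm_qk, one_add_one_eq_two]
end

section
/- Let P(X) = X³ − X²(i+j+k) + X(i−j+k) + 1 and Q(X) = 2X³ − 2X²(i+j) + 2Xk in ℍ[X], with derivatives P'(X) = 3X² − 2X(i+j+k) + (i−j+k) and Q'(X) = 6X² − 4X(i+j) + 2k. Then for y = (1 + 9i + 4j − √2 k)/10 one has |y| = 1, |P'(y)|² = (7/25)(5+√2), and |Q'(y)|² = (4/25)(10−3√2); in particular |P'(y)| > |Q'(y)|. -/
/-!
A direct computation in coordinates, where the only nonlinear fact needed is `√2 ^ 2 = 2`: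
`P'(y) = (-(34 + 20√2) + (54 - 20√2) i + (84 + 20√2) j - (20 + 6√2) k) / 100` and
`Q'(y) = (-68 + (68 - 40√2) i + (8 + 40√2) j - 12√2 k) / 100`.
Comparing the squared norms, `40 - 12√2 < 35 + 7√2` amounts to `5 < 19√2`.
-/

namespace Quaternion

section ofNat

variable {R : Type*} [CommRing R] (n : ℕ) [n.AtLeastTwo]

@[simp] lemma re_ofNat : (ofNat(n) : ℍ[R]).re = ofNat(n) := rfl
@[simp] lemma imI_ofNat : (ofNat(n) : ℍ[R]).imI = 0 := rfl
@[simp] lemma imJ_ofNat : (ofNat(n) : ℍ[R]).imJ = 0 := rfl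
@[simp] lemma imK_ofNat : (ofNat(n) : ℍ[R]).imK = 0 := rfl

end ofNat

lemma sq_norm_eq (q : ℍ[ℝ]) : ‖q‖ ^ 2 = q.re ^ 2 + q.imI ^ 2 + q.imJ ^ 2 + q.imK ^ 2 := by
  rw [sq, ← normSq_eq_norm_mul_self, normSq_def']

end Quaternion

open Quaternion

noncomputable def testPoint : Quaternion ℝ := ⟨1/10, 9/10, 4/10, -(Real.sqrt 2)/10⟩

noncomputable def derivP (x : Quaternion ℝ) : Quaternion ℝ :=
  x ^ 2 * 3 - x * (2 * (qi + qj + qk)) + (qi - qj + qk)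

noncomputable def derivQ (x : Quaternion ℝ) : Quaternion ℝ :=
  x ^ 2 * 6 - x * (4 * (qi + qj)) + 2 * qk

lemma sq_sqrt_two : Real.sqrt 2 ^ 2 = 2 := Real.sq_sqrt zero_le_two

lemma norm_testPoint : ‖testPoint‖ = 1 := by
  have h : ‖testPoint‖ ^ 2 = 1 ^ 2 := by
    rw [Quaternion.sq_norm_eq]
    simp only [testPoint]
    linear_combination (1 / 100 : ℝ) * sq_sqrt_two
  exact (pow_left_inj₀ (norm_nonneg _) zero_le_one two_ne_zero).1 h

lemma derivP_testPoint : derivP testPoint =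
    (⟨-(34 + 20 * Real.sqrt 2) / 100, (54 - 20 * Real.sqrt 2) / 100,
      (84 + 20 * Real.sqrt 2) / 100, -(20 + 6 * Real.sqrt 2) / 100⟩ : Quaternion ℝ) := by
  ext <;> simp only [derivP, sq, re_mul, imI_mul, imJ_mul, imK_mul, re_add, imI_add, imJ_add,
      imK_add, re_sub, imI_sub, imJ_sub, imK_sub, re_ofNat, imI_ofNat, imJ_ofNat, imK_ofNat]
  all_goals simp only [testPoint, qi, qj, qk]
  · linear_combination (-3 / 100 : ℝ) * sq_sqrt_two
  all_goals ring

lemma derivQ_testPoint : derivQ testPoint =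
    (⟨-68 / 100, (68 - 40 * Real.sqrt 2) / 100, (8 + 40 * Real.sqrt 2) / 100,
      -(12 * Real.sqrt 2) / 100⟩ : Quaternion ℝ) := by
  ext <;> simp only [derivQ, sq, re_mul, imI_mul, imJ_mul, imK_mul, re_add, imI_add, imJ_add,
      imK_add, re_sub, imI_sub, imJ_sub, imK_sub, re_ofNat, imI_ofNat, imJ_ofNat, imK_ofNat]
  all_goals simp only [testPoint, qi, qj, qk]
  · linear_combination (-6 / 100 : ℝ) * sq_sqrt_two
  all_goals ring

lemma sq_norm_derivP_testPoint : ‖derivP testPoint‖ ^ 2 = 7 / 25 * (5 + Real.sqrt 2) := by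
  rw [Quaternion.sq_norm_eq, derivP_testPoint]
  linear_combination (309 / 2500 : ℝ) * sq_sqrt_two

lemma sq_norm_derivQ_testPoint : ‖derivQ testPoint‖ ^ 2 = 4 / 25 * (10 - 3 * Real.sqrt 2) := by
  rw [Quaternion.sq_norm_eq, derivQ_testPoint]
  linear_combination (209 / 625 : ℝ) * sq_sqrt_two

/-- With `P'(X) = 3X² − 2X(i+j+k) + (i−j+k)` and `Q'(X) = 6X² − 4X(i+j) + 2k`,
for `y = (1 + 9i + 4j − √2 k)/10` one has `‖y‖ = 1`,
`‖P'(y)‖² = (7/25)(5+√2)`, `‖Q'(y)‖² = (4/25)(10−3√2)`, and `‖P'(y)‖ > ‖Q'(y)‖`. -/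
theorem counterexample_derivative_comparison :
    let y : Quaternion ℝ := ⟨1/10, 9/10, 4/10, -(Real.sqrt 2)/10⟩
    ‖y‖ = 1 ∧
    ‖y ^ 2 * 3 - y * (2 * (qi + qj + qk)) + (qi - qj + qk)‖ ^ 2 = (7/25) * (5 + Real.sqrt 2) ∧
    ‖y ^ 2 * 6 - y * (4 * (qi + qj)) + 2 * qk‖ ^ 2 = (4/25) * (10 - 3 * Real.sqrt 2) ∧
    ‖y ^ 2 * 6 - y * (4 * (qi + qj)) + 2 * qk‖ <
      ‖y ^ 2 * 3 - y * (2 * (qi + qj + qk)) + (qi - qj + qk)‖ := by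
  change ‖testPoint‖ = 1 ∧ ‖derivP testPoint‖ ^ 2 = _ ∧ ‖derivQ testPoint‖ ^ 2 = _ ∧
    ‖derivQ testPoint‖ < ‖derivP testPoint‖
  refine ⟨norm_testPoint, sq_norm_derivP_testPoint, sq_norm_derivQ_testPoint, ?_⟩
  have h19 : (5 : ℝ) < 19 * Real.sqrt 2 := by nlinarith [sq_sqrt_two, Real.sqrt_nonneg 2]
  refine lt_of_pow_lt_pow_left₀ 2 (norm_nonneg _) ?_
  rw [sq_norm_derivP_testPoint, sq_norm_derivQ_testPoint]
  linarith
end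

section
/- Define Z̃_{-1}(x) = 0, Z̃_0(x) = 1, and Z̃_k(x) = 2 Re(x) Z̃_{k-1}(x) − |x|² Z̃_{k-2}(x) for k ≥ 1, functions ℍ → ℝ. Then each Z̃_k is a harmonic polynomial function of the four real coordinates x₀, x₁, x₂, x₃ of x (i.e., Δ Z̃_k = 0 where Δ = ∂²/∂x₀² + ∂²/∂x₁² + ∂²/∂x₂² + ∂²/∂x₃²). -/
/-!
Write `a = Re x = ⟪1, x⟫` and `n = ‖x‖²`. Then `Z̃_k(x) = P_k(a, n)` for the polynomials
`P_k ∈ ℝ[a, n]` obeying the same recurrence. On a `d`-dimensional inner product space and for a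
unit vector `u`, the chain rule turns the Laplacian of `y ↦ P(⟪u, y⟫, ‖y‖²)` into the operator
`L_d P = P_aa + 4a P_an + 4n P_nn + 2d P_n` on `ℝ[a, n]`. By the product rule,
`L_4 (2a P_{k+1} - n P_k) = 2a L_4 P_{k+1} - n L_4 P_k + 4 (∂_u P_{k+1} - (a ∂_a + 2n ∂_n + 2) P_k)`
with `∂_u = ∂_a + 2a ∂_n`. The bracket vanishes, again by induction along the recurrence: as `P_k`
is homogeneous of degree `k` in `y`, it says `∂_u P_{k+1} = (k + 2) P_k`.
-/

/-- `zonal (k+1) = Z̃_k`: the normalized zonal harmonics with pole `1`, with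
`zonal 0 = Z̃_{-1} = 0`, `zonal 1 = Z̃_0 = 1`, and the recurrence
`Z̃_k(x) = 2 Re(x) Z̃_{k-1}(x) − |x|² Z̃_{k-2}(x)`. -/
noncomputable def zonal : ℕ → Quaternion ℝ → ℝ
  | 0, _ => 0
  | 1, _ => 1
  | (k + 2), x => 2 * x.re * zonal (k + 1) x - ‖x‖ ^ 2 * zonal k x

/-- The Laplacian of `f : ℍ → ℝ` in the four real coordinates: the sum of the pure
second derivatives in the directions `1, i, j, k`. -/
noncomputable def quatLaplacian (f : Quaternion ℝ → ℝ) (x : Quaternion ℝ) : ℝ :=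
  iteratedFDeriv ℝ 2 f x ![1, 1] +
  iteratedFDeriv ℝ 2 f x ![⟨0,1,0,0⟩, ⟨0,1,0,0⟩] +
  iteratedFDeriv ℝ 2 f x ![⟨0,0,1,0⟩, ⟨0,0,1,0⟩] +
  iteratedFDeriv ℝ 2 f x ![⟨0,0,0,1⟩, ⟨0,0,0,1⟩]

open MvPolynomial InnerProductSpace Laplacian
open scoped RealInnerProductSpace

@[simp]
theorem MvPolynomial.pderiv_ofNat {σ R : Type*} [CommSemiring R] (i : σ) (n : ℕ) [n.AtLeastTwo] :
    pderiv i (ofNat(n) : MvPolynomial σ R) = 0 :=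
  Derivation.map_natCast _ n

/-- `zonal` as a polynomial in `X 0 = a = Re x` and `X 1 = n = ‖x‖²`. -/
noncomputable def zonalPoly : ℕ → MvPolynomial (Fin 2) ℝ
  | 0 => 0
  | 1 => 1
  | (k + 2) => 2 * X 0 * zonalPoly (k + 1) - X 1 * zonalPoly k

/-- `∂_u` in the coordinates `poleCoords u`, for a unit vector `u`. -/
noncomputable def poleDeriv (p : MvPolynomial (Fin 2) ℝ) : MvPolynomial (Fin 2) ℝ :=
  pderiv 0 p + 2 * X 0 * pderiv 1 p

/-- The Euler operator `y ⬝ ∇` in the coordinates `poleCoords u`: `a` has degree one, `n` two. -/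
noncomputable def weightedEuler (p : MvPolynomial (Fin 2) ℝ) : MvPolynomial (Fin 2) ℝ :=
  X 0 * pderiv 0 p + 2 * X 1 * pderiv 1 p

noncomputable def poleLaplacian (d : ℕ) (p : MvPolynomial (Fin 2) ℝ) :
    MvPolynomial (Fin 2) ℝ :=
  pderiv 0 (pderiv 0 p) + 2 * X 0 * (pderiv 1 (pderiv 0 p) + pderiv 0 (pderiv 1 p))
    + 4 * X 1 * pderiv 1 (pderiv 1 p) + 2 * (d : MvPolynomial (Fin 2) ℝ) * pderiv 1 p

theorem poleDeriv_zonalPoly_succ :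
    ∀ k, poleDeriv (zonalPoly (k + 1)) = weightedEuler (zonalPoly k) + 2 * zonalPoly k
  | 0 => by simp [zonalPoly, poleDeriv, weightedEuler]
  | 1 => by simp [zonalPoly, poleDeriv, weightedEuler, pderiv_X]
  | k + 2 => by
    have h₁ := poleDeriv_zonalPoly_succ (k + 1)
    have h₀ := poleDeriv_zonalPoly_succ k
    simp only [zonalPoly, poleDeriv, weightedEuler, map_sub, Derivation.leibniz, smul_eq_mul,
      pderiv_X_self, pderiv_X_of_ne zero_ne_one, pderiv_X_of_ne one_ne_zero, pderiv_ofNat, mul_one,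
      mul_zero, add_zero] at h₁ h₀ ⊢
    linear_combination 2 * X 0 * h₁ - X 1 * h₀

theorem poleLaplacian_four_zonalPoly : ∀ k, poleLaplacian 4 (zonalPoly k) = 0
  | 0 => by simp [zonalPoly, poleLaplacian]
  | 1 => by simp [zonalPoly, poleLaplacian]
  | k + 2 => by
    have h₁ := poleLaplacian_four_zonalPoly (k + 1)
    have h₀ := poleLaplacian_four_zonalPoly k
    have hpole := poleDeriv_zonalPoly_succ k
    simp only [zonalPoly, poleDeriv, weightedEuler, poleLaplacian, map_add, map_sub,
      Derivation.leibniz, smul_eq_mul, pderiv_X_self, pderiv_X_of_ne zero_ne_one,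
      pderiv_X_of_ne one_ne_zero, pderiv_ofNat, mul_one, mul_zero, add_zero, zero_add,
      Nat.cast_ofNat] at h₁ h₀ hpole ⊢
    linear_combination 2 * X 0 * h₁ - X 1 * h₀ + 4 * hpole

theorem HasFDerivAt.eval_mvPolynomial {E σ : Type*} [NormedAddCommGroup E] [NormedSpace ℝ E]
    [Fintype σ] {c : E → σ → ℝ} {c' : σ → E →L[ℝ] ℝ} {x : E}
    (hc : ∀ i, HasFDerivAt (fun y => c y i) (c' i) x) (p : MvPolynomial σ ℝ) :
    HasFDerivAt (fun y => eval (c y) p) (∑ i, eval (c x) (pderiv i p) • c' i) x := by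
  induction p using MvPolynomial.induction_on with
  | C a => simpa using hasFDerivAt_const (𝕜 := ℝ) a x
  | add p q hp hq => simpa [add_smul, Finset.sum_add_distrib] using hp.fun_add hq
  | mul_X p i hp =>
    classical
    simp only [eval_mul, eval_X]
    refine (hp.fun_mul (hc i)).congr_fderiv ?_
    simp [pderiv_X, Pi.single_apply, add_smul, Finset.sum_add_distrib, Finset.smul_sum, smul_smul,
      apply_ite (eval (c x)), ite_smul]

section PoleCoords

variable {E : Type*} [NormedAddCommGroup E] [InnerProductSpace ℝ E]

noncomputable def poleCoords (u y : E) : Fin 2 → ℝ := ![⟪u, y⟫, ‖y‖ ^ 2]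

theorem hasFDerivAt_eval_poleCoords (u x : E) (p : MvPolynomial (Fin 2) ℝ) :
    HasFDerivAt (fun y => eval (poleCoords u y) p)
      (eval (poleCoords u x) (pderiv 0 p) • innerSL ℝ u
        + eval (poleCoords u x) (pderiv 1 p) • (2 • innerSL ℝ x)) x := by
  have hc : ∀ i, HasFDerivAt (fun y => poleCoords u y i) (![innerSL ℝ u, 2 • innerSL ℝ x] i) x :=
    Fin.forall_fin_two.2 ⟨(innerSL ℝ u).hasFDerivAt, (hasStrictFDerivAt_norm_sq x).hasFDerivAt⟩
  simpa [Fin.sum_univ_two] using HasFDerivAt.eval_mvPolynomial hc p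

theorem iteratedFDeriv_two_eval_poleCoords (u x v : E) (p : MvPolynomial (Fin 2) ℝ) :
    iteratedFDeriv ℝ 2 (fun y => eval (poleCoords u y) p) x ![v, v] =
      eval (poleCoords u x) (pderiv 0 (pderiv 0 p)) * ⟪u, v⟫ ^ 2
      + eval (poleCoords u x) (pderiv 1 (pderiv 0 p) + pderiv 0 (pderiv 1 p))
          * (2 * (⟪u, v⟫ * ⟪x, v⟫))
      + eval (poleCoords u x) (pderiv 1 (pderiv 1 p)) * (4 * ⟪x, v⟫ ^ 2)
      + eval (poleCoords u x) (pderiv 1 p) * (2 * ‖v‖ ^ 2) := by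
  have hfderiv : fderiv ℝ (fun y => eval (poleCoords u y) p) = fun y =>
      eval (poleCoords u y) (pderiv 0 p) • innerSL ℝ u
        + eval (poleCoords u y) (pderiv 1 p) • (2 • innerSL ℝ y) :=
    funext fun y => (hasFDerivAt_eval_poleCoords u y p).fderiv
  -- `innerSL ℝ` is typed as conjugate-linear; simp only evaluates it once ascribed a linear type
  have hinner (w w' : E) : (innerSL ℝ : E →L[ℝ] E →L[ℝ] ℝ) w w' = ⟪w, w'⟫ := rfl
  have hsecond := ((hasFDerivAt_eval_poleCoords u x (pderiv 0 p)).smul_const (innerSL ℝ u)).fun_add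
    ((hasFDerivAt_eval_poleCoords u x (pderiv 1 p)).fun_smul
      ((innerSL ℝ : E →L[ℝ] E →L[ℝ] ℝ).hasFDerivAt.fun_const_smul 2))
  rw [iteratedFDeriv_two_apply, hfderiv, hsecond.fderiv]
  simp only [add_apply, ContinuousLinearMap.smulRight_apply,
    smul_apply, hinner, smul_eq_mul, nsmul_eq_mul, Nat.cast_ofNat,
    Matrix.cons_val_zero, Matrix.cons_val_one, Matrix.cons_val_fin_one, map_add,
    real_inner_self_eq_norm_sq]
  ring

theorem laplacian_eval_poleCoords [FiniteDimensional ℝ E] {u : E} (hu : ‖u‖ = 1)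
    (p : MvPolynomial (Fin 2) ℝ) (x : E) :
    Δ (fun y => eval (poleCoords u y) p) x
      = eval (poleCoords u x) (poleLaplacian (Module.finrank ℝ E) p) := by
  set b := stdOrthonormalBasis ℝ E
  have hparseval (w w' : E) : ∑ i, ⟪w, b i⟫ * ⟪w', b i⟫ = ⟪w, w'⟫ := by
    simpa [real_inner_comm] using b.sum_inner_mul_inner w w'
  rw [laplacian_eq_iteratedFDeriv_orthonormalBasis _ b]
  simp only [iteratedFDeriv_two_eval_poleCoords, Finset.sum_add_distrib, ← Finset.mul_sum]
  simp only [poleLaplacian, poleCoords, sq, hparseval, real_inner_self_eq_norm_sq, hu,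
    b.norm_eq_one, mul_one, Finset.sum_const, Finset.card_univ, Fintype.card_fin,
    nsmul_eq_mul, map_add, map_mul, eval_ofNat, eval_X, map_natCast, Matrix.cons_val_zero,
    Matrix.cons_val_one, Matrix.cons_val_fin_one]
  ring

end PoleCoords

noncomputable def Quaternion.orthonormalBasisOneIJK : OrthonormalBasis (Fin 4) ℝ (Quaternion ℝ) :=
  (EuclideanSpace.basisFun (Fin 4) ℝ).map Quaternion.linearIsometryEquivTuple.symm

theorem quatLaplacian_eq_laplacian (f : Quaternion ℝ → ℝ) : quatLaplacian f = Δ f := by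
  have hb (i : Fin 4) :
      Quaternion.orthonormalBasisOneIJK i = ![1, ⟨0,1,0,0⟩, ⟨0,0,1,0⟩, ⟨0,0,0,1⟩] i := by
    fin_cases i <;> ext <;> simp [Quaternion.orthonormalBasisOneIJK, Quaternion.re_one,
      Quaternion.imI_one, Quaternion.imJ_one, Quaternion.imK_one]
  rw [laplacian_eq_iteratedFDeriv_orthonormalBasis f Quaternion.orthonormalBasisOneIJK]
  ext x
  simp only [Fin.sum_univ_four, hb]
  rfl

theorem zonal_eq_eval_zonalPoly :
    ∀ k, zonal k = fun x => eval (poleCoords 1 x) (zonalPoly k)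
  | 0 => by simp [zonal, zonalPoly]
  | 1 => by simp [zonal, zonalPoly]
  | k + 2 => by
    funext x
    simp [zonal, zonalPoly, zonal_eq_eval_zonalPoly (k + 1), zonal_eq_eval_zonalPoly k, poleCoords,
      Quaternion.inner_def]

/-- Each `Z̃_k` is a harmonic function of the four real coordinates:
`Δ Z̃_k = 0` on all of `ℍ ≅ ℝ⁴`. -/
theorem zonal_harmonic (k : ℕ) (x : Quaternion ℝ) :
    quatLaplacian (zonal k) x = 0 := by
  rw [quatLaplacian_eq_laplacian, zonal_eq_eval_zonalPoly, laplacian_eval_poleCoords norm_one,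
    Quaternion.finrank_eq_four, poleLaplacian_four_zonalPoly, map_zero]
end

section
/- Every quaternionic polynomial P(X) = Σ_{k=0}^d X^k c_k, viewed as a function ℍ → ℍ via P(x) = Σ_k x^k c_k, has biharmonic real components on ℝ⁴: Δ²(P) = 0, where Δ is the Laplacian in the four real coordinates of x. -/
/-- Componentwise Laplacian of an `ℍ`-valued function of four real variables. -/
noncomputable def quatLaplacianH (f : Quaternion ℝ → Quaternion ℝ) (x : Quaternion ℝ) :
    Quaternion ℝ :=
  iteratedFDeriv ℝ 2 f x ![1, 1] +
  iteratedFDeriv ℝ 2 f x ![⟨0,1,0,0⟩, ⟨0,1,0,0⟩] +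
  iteratedFDeriv ℝ 2 f x ![⟨0,0,1,0⟩, ⟨0,0,1,0⟩] +
  iteratedFDeriv ℝ 2 f x ![⟨0,0,0,1⟩, ⟨0,0,0,1⟩]

/-!
Let `D = Σ eₘ ∂ₘ` and `D̄ = Σ ēₘ ∂ₘ` (with `eₘ = 1, i, j, k`) be the Cauchy–Fueter operator and
its conjugate. Since `ēₘ eₗ + ēₗ eₘ = 2 δₘₗ`, the Laplacian factors as `Δ = D̄ D` on `C²` functions.

For a real polynomial `f(X, Y)` put `F(x) = f(x, x̄)`; its values commute with `x` and `x̄`.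
The product rule and the identities `Σ eₘ z eₘ = -2 z̄`, `Σ eₘ z ēₘ = 2 (z + z̄)` give,
by induction on `f`,
  `(x - x̄) (D F - 2 ∂_Y f) = -2 (f - f^σ)`  and  `(x - x̄) (D̄ F - 2 ∂_X f) = 2 (f - f^σ)`
at `(x, x̄)`, where `f^σ(X, Y) = f(Y, X)`. As non-real quaternions are dense, `D` and `D̄` act on
such `F` as `2 ∂_Y` and `2 ∂_X` corrected by the divided difference `(f - f^σ) / (X - Y)`.

For `f = Xᵏ` let `h = (Xᵏ - Yᵏ) / (X - Y)`, which is symmetric. Then `D xᵏ = -2 h` and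
`Δ xᵏ = D̄ (-2 h) = -4 ∂_X h`. Differentiating `(X - Y) h = Xᵏ - Yᵏ` in `X` and in `Y` gives
`(X - Y) ∂_X ∂_Y h = ∂_X h - ∂_Y h`, which says precisely that `D (∂_X h) = 0`: `Δ xᵏ` is Fueter
regular, so `Δ² xᵏ = D̄ D Δ xᵏ = 0`.
-/

open Finset MvPolynomial

local notation "σ" => rename (Equiv.swap (0 : Fin 2) 1)

@[simp] theorem Derivation.map_ofNat {R A M : Type*} [CommSemiring R] [CommSemiring A]
    [AddCommMonoid M] [Algebra R A] [Module A M] [Module R M] (D : Derivation R A M) (n : ℕ)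
    [n.AtLeastTwo] : D (no_index (OfNat.ofNat n : A)) = 0 := by
  rw [← Nat.cast_ofNat]
  exact D.map_natCast n

section DivDiffPow

noncomputable def divDiffPow (k : ℕ) : MvPolynomial (Fin 2) ℝ :=
  ∑ i ∈ range k, X 0 ^ i * X 1 ^ (k - 1 - i)

lemma divDiffPow_mul (k : ℕ) : divDiffPow k * (X 0 - X 1) = X 0 ^ k - X 1 ^ k :=
  geom_sum₂_mul _ _ k

lemma rename_swap_divDiffPow (k : ℕ) : σ (divDiffPow k) = divDiffPow k := by
  simpa [divDiffPow] using
    ((Commute.all (X 0 : MvPolynomial (Fin 2) ℝ) (X 1)).geom_sum₂_comm k).symm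

lemma sub_mul_pderiv_pderiv_divDiffPow (k : ℕ) :
    (X 0 - X 1) * pderiv 1 (pderiv 0 (divDiffPow k)) =
      pderiv 0 (divDiffPow k) - pderiv 1 (divDiffPow k) := by
  have h := congrArg (fun r => pderiv 1 (pderiv 0 r)) (divDiffPow_mul k)
  simp [Derivation.leibniz, Derivation.leibniz_pow, pderiv_X] at h
  linear_combination h

end DivDiffPow

namespace Quaternion

instance : StarModule ℝ ℍ := ⟨fun r q => by ext <;> simp⟩

lemma fderiv_star_apply (x v : ℍ) : fderiv ℝ (fun y : ℍ => star y) x v = star v := by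
  rw [fderiv_star (f := fun y => y)]
  simp

section OneIJK

def oneIJK : Fin 4 → ℍ := ![1, ⟨0, 1, 0, 0⟩, ⟨0, 0, 1, 0⟩, ⟨0, 0, 0, 1⟩]

/- Products are expanded into components before `oneIJK` is unfolded: the unfolded quaternion
literals no longer match the component lemmas for `ℍ`. -/
lemma sum_oneIJK_mul_mul_oneIJK (z : ℍ) : ∑ m, oneIJK m * z * oneIJK m = -2 * star z := by
  rw [neg_mul, two_mul]
  ext <;> simp [Fin.sum_univ_four, re_mul, imI_mul, imJ_mul, imK_mul] <;> simp [oneIJK]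

lemma sum_oneIJK_mul_mul_star_oneIJK (z : ℍ) :
    ∑ m, oneIJK m * z * star (oneIJK m) = 2 * (z + star z) := by
  rw [two_mul]
  ext <;> simp [Fin.sum_univ_four, re_mul, imI_mul, imJ_mul, imK_mul] <;> simp [oneIJK]
  ring

lemma sum_star_oneIJK_mul_mul_oneIJK (z : ℍ) :
    ∑ m, star (oneIJK m) * z * oneIJK m = 2 * (z + star z) := by
  rw [two_mul]
  ext <;> simp [Fin.sum_univ_four, re_mul, imI_mul, imJ_mul, imK_mul] <;> simp [oneIJK]
  ring

lemma sum_star_oneIJK_mul_mul_star_oneIJK (z : ℍ) :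
    ∑ m, star (oneIJK m) * z * star (oneIJK m) = -2 * star z := by
  rw [neg_mul, two_mul]
  ext <;> simp [Fin.sum_univ_four, re_mul, imI_mul, imJ_mul, imK_mul] <;> simp [oneIJK]

lemma sum_star_oneIJK_mul_oneIJK_mul_of_symm (S : Fin 4 → Fin 4 → ℍ)
    (hS : ∀ m l, S m l = S l m) :
    ∑ m, ∑ l, star (oneIJK m) * (oneIJK l * S m l) = ∑ m, S m m := by
  ext <;> simp [Fin.sum_univ_four, re_mul, imI_mul, imJ_mul, imK_mul, hS 1 0, hS 2 0, hS 3 0,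
    hS 2 1, hS 3 1, hS 3 2] <;> simp [oneIJK] <;> ring

end OneIJK

noncomputable def fueter (f : ℍ → ℍ) (x : ℍ) : ℍ := ∑ m, oneIJK m * fderiv ℝ f x (oneIJK m)

noncomputable def fueterBar (f : ℍ → ℍ) (x : ℍ) : ℍ :=
  ∑ m, star (oneIJK m) * fderiv ℝ f x (oneIJK m)

lemma quatLaplacianH_eq_sum (f : ℍ → ℍ) (x : ℍ) :
    quatLaplacianH f x = ∑ m, fderiv ℝ (fderiv ℝ f) x (oneIJK m) (oneIJK m) := by
  simp [quatLaplacianH, iteratedFDeriv_two_apply, Fin.sum_univ_four, oneIJK]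

lemma fderiv_fueter_apply {f : ℍ → ℍ} {x : ℍ} (hf : DifferentiableAt ℝ (fderiv ℝ f) x) (v : ℍ) :
    fderiv ℝ (fueter f) x v = ∑ l, oneIJK l * fderiv ℝ (fderiv ℝ f) x v (oneIJK l) := by
  have hf' (l : Fin 4) : DifferentiableAt ℝ (fun y => fderiv ℝ f y (oneIJK l)) x :=
    hf.clm_apply (differentiableAt_const _)
  unfold fueter
  rw [fderiv_fun_sum fun l _ => (hf' l).const_mul _]
  simp [fderiv_const_mul (hf' _), fderiv_clm_apply hf (differentiableAt_const _)]

lemma quatLaplacianH_eq_fueterBar_fueter {f : ℍ → ℍ} (hf : ContDiff ℝ 2 f) (x : ℍ) :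
    quatLaplacianH f x = fueterBar (fueter f) x := by
  have hsymm := hf.contDiffAt.isSymmSndFDerivAt (x := x)
    (by simp [minSmoothness_of_isRCLikeNormedField])
  have hf2 : DifferentiableAt ℝ (fderiv ℝ f) x :=
    (hf.fderiv_right (m := 1) (by norm_num)).differentiable one_ne_zero x
  simp only [fueterBar, fderiv_fueter_apply hf2, Finset.mul_sum]
  rw [sum_star_oneIJK_mul_oneIJK_mul_of_symm _ fun m l => hsymm _ _, quatLaplacianH_eq_sum]

lemma continuous_fueter {f : ℍ → ℍ} (hf : ContDiff ℝ 1 f) : Continuous (fueter f) := by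
  have := hf.continuous_fderiv one_ne_zero
  unfold fueter
  fun_prop

lemma continuous_fueterBar {f : ℍ → ℍ} (hf : ContDiff ℝ 1 f) : Continuous (fueterBar f) := by
  have := hf.continuous_fderiv one_ne_zero
  unfold fueterBar
  fun_prop

section ProductRules

variable {F G : ℍ → ℍ} {x : ℍ}

lemma fueter_const (c : ℍ) : fueter (fun _ => c) x = 0 := by
  simp [fueter]

lemma fueterBar_const (c : ℍ) : fueterBar (fun _ => c) x = 0 := by
  simp [fueterBar]

lemma fueter_add (hF : DifferentiableAt ℝ F x) (hG : DifferentiableAt ℝ G x) :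
    fueter (fun y => F y + G y) x = fueter F x + fueter G x := by
  simp [fueter, fderiv_fun_add hF hG, mul_add, sum_add_distrib]

lemma fueterBar_add (hF : DifferentiableAt ℝ F x) (hG : DifferentiableAt ℝ G x) :
    fueterBar (fun y => F y + G y) x = fueterBar F x + fueterBar G x := by
  simp [fueterBar, fderiv_fun_add hF hG, mul_add, sum_add_distrib]

lemma fueter_mul (hF : DifferentiableAt ℝ F x) (hG : DifferentiableAt ℝ G x) :
    fueter (fun y => F y * G y) x =
      fueter F x * G x + ∑ m, oneIJK m * F x * fderiv ℝ G x (oneIJK m) := by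
  simp [fueter, fderiv_fun_mul' hF hG, mul_add, sum_add_distrib, sum_mul, mul_assoc, add_comm]

lemma fueterBar_mul (hF : DifferentiableAt ℝ F x) (hG : DifferentiableAt ℝ G x) :
    fueterBar (fun y => F y * G y) x =
      fueterBar F x * G x + ∑ m, star (oneIJK m) * F x * fderiv ℝ G x (oneIJK m) := by
  simp [fueterBar, fderiv_fun_mul' hF hG, mul_add, sum_add_distrib, sum_mul, mul_assoc, add_comm]

lemma fueter_mul_self (hF : DifferentiableAt ℝ F x) :
    fueter (fun y => F y * y) x = fueter F x * x - 2 * star (F x) := by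
  rw [fueter_mul (G := fun y => y) hF differentiableAt_fun_id]
  simp [sum_oneIJK_mul_mul_oneIJK, sub_eq_add_neg]

lemma fueter_mul_star_self (hF : DifferentiableAt ℝ F x) :
    fueter (fun y => F y * star y) x = fueter F x * star x + 2 * (F x + star (F x)) := by
  rw [fueter_mul hF differentiableAt_fun_id.star]
  simp [fderiv_star_apply, sum_oneIJK_mul_mul_star_oneIJK]

lemma fueterBar_mul_self (hF : DifferentiableAt ℝ F x) :
    fueterBar (fun y => F y * y) x = fueterBar F x * x + 2 * (F x + star (F x)) := by
  rw [fueterBar_mul (G := fun y => y) hF differentiableAt_fun_id]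
  simp [sum_star_oneIJK_mul_mul_oneIJK]

lemma fueterBar_mul_star_self (hF : DifferentiableAt ℝ F x) :
    fueterBar (fun y => F y * star y) x = fueterBar F x * star x - 2 * star (F x) := by
  rw [fueterBar_mul hF differentiableAt_fun_id.star]
  simp [fderiv_star_apply, sum_star_oneIJK_mul_mul_star_oneIJK, sub_eq_add_neg]

end ProductRules

lemma eq_zero_of_sub_star_mul_eq_zero {F : ℍ → ℍ} (hF : Continuous F)
    (h : ∀ x, (x - star x) * F x = 0) : F = 0 := by
  have hdense : Dense (Set.range ((↑) : ℝ → ℍ))ᶜ :=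
    ContDiff.dense_compl_range_of_finrank_lt_finrank
      (Algebra.linearMap ℝ ℍ).toContinuousLinearMap.contDiff (by simp [finrank_eq_four])
  refine hF.ext_on hdense continuous_const fun x hx => (mul_eq_zero.mp (h x)).resolve_left ?_
  rw [sub_eq_zero, eq_comm, star_eq_self]
  exact fun hre => hx ⟨x.re, hre.symm⟩

section AevalConj

/- Evaluation at the commuting pair `(x, x̄)`, through the commutative star subalgebra
generated by `x`. -/
open scoped IsMulCommutative in
noncomputable def aevalConj (x : ℍ) : MvPolynomial (Fin 2) ℝ →ₐ[ℝ] ℍ :=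
  (StarAlgebra.adjoin ℝ {x}).subtype.toAlgHom.comp
    (aeval ![⟨x, StarAlgebra.self_mem_adjoin_singleton ℝ x⟩,
      ⟨star x, StarAlgebra.star_self_mem_adjoin_singleton ℝ x⟩])

@[simp] lemma aevalConj_X_zero (x : ℍ) : aevalConj x (X 0) = x := by simp [aevalConj]

@[simp] lemma aevalConj_X_one (x : ℍ) : aevalConj x (X 1) = star x := by simp [aevalConj]

@[simp] lemma aevalConj_C (x : ℍ) (a : ℝ) : aevalConj x (C a) = algebraMap ℝ ℍ a :=
  (aevalConj x).commutes a

lemma commute_aevalConj (x : ℍ) (p q : MvPolynomial (Fin 2) ℝ) :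
    Commute (aevalConj x p) (aevalConj x q) := by
  rw [Commute, SemiconjBy, ← map_mul, mul_comm, map_mul]

lemma star_aevalConj (x : ℍ) (p : MvPolynomial (Fin 2) ℝ) :
    star (aevalConj x p) = aevalConj x (σ p) := by
  induction p using MvPolynomial.induction_on with
  | C a => simp [Algebra.algebraMap_eq_smul_one]
  | add p q hp hq => simp [hp, hq]
  | mul_X p i hp =>
    have hX : star (aevalConj x (X i)) = aevalConj x (X (Equiv.swap 0 1 i)) := by
      fin_cases i <;> simp
    rw [map_mul, star_mul, hX, hp, map_mul, map_mul, rename_X]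
    exact (commute_aevalConj x _ _).eq

lemma contDiff_aevalConj (p : MvPolynomial (Fin 2) ℝ) {n : WithTop ℕ∞} :
    ContDiff ℝ n fun y => aevalConj y p := by
  induction p using MvPolynomial.induction_on with
  | C a => simp [contDiff_const]
  | add p q hp hq => simpa using hp.add hq
  | mul_X p i hp =>
    fin_cases i
    · simpa using hp.mul contDiff_id
    · simpa using hp.mul (starL' ℝ : ℍ ≃L[ℝ] ℍ).contDiff

lemma differentiable_aevalConj (p : MvPolynomial (Fin 2) ℝ) :
    Differentiable ℝ fun y => aevalConj y p :=
  (contDiff_aevalConj p).differentiable one_ne_zero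

end AevalConj

lemma sub_star_mul_fueter_aevalConj (p : MvPolynomial (Fin 2) ℝ) (x : ℍ) :
    (x - star x) * (fueter (fun y => aevalConj y p) x - 2 * aevalConj x (pderiv 1 p)) =
      -2 * (aevalConj x p - star (aevalConj x p)) := by
  induction p using MvPolynomial.induction_on with
  | C a => simp [fueter_const, Algebra.algebraMap_eq_smul_one]
  | add p q hp hq =>
    simp only [map_add, fueter_add (differentiable_aevalConj p x) (differentiable_aevalConj q x),
      star_add]
    rw [← sub_eq_zero] at hp hq ⊢
    have h := congrArg₂ (· + ·) hp hq
    rw [add_zero] at h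
    convert h using 1
    noncomm_ring
  | mul_X p i hp =>
    match i with
    | 0 =>
      have hc : Commute x (star (aevalConj x p)) := by
        simpa [star_aevalConj] using commute_aevalConj x (X 0) (σ p)
      have hder : pderiv 1 (p * X 0) = pderiv 1 p * X 0 := by
        simp [Derivation.leibniz, pderiv_X, mul_comm]
      have hfun : (fun y => aevalConj y (p * X 0)) = fun y => aevalConj y p * y := by simp
      rw [hfun, fueter_mul_self (differentiable_aevalConj p x), hder, map_mul, map_mul,
        aevalConj_X_zero, star_mul]
      calc _ = (x - star x) * (fueter (fun y => aevalConj y p) x - 2 * aevalConj x (pderiv 1 p))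
            * x - 2 * (x * star (aevalConj x p) - star x * star (aevalConj x p)) := by
              noncomm_ring
        _ = _ := by rw [hp, hc.eq]; noncomm_ring
    | 1 =>
      have hc : Commute (star x) (star (aevalConj x p)) := by
        simpa [star_aevalConj] using commute_aevalConj x (X 1) (σ p)
      have hder : pderiv 1 (p * X 1) = pderiv 1 p * X 1 + p := by
        simp [Derivation.leibniz, pderiv_X, mul_comm, add_comm]
      have hfun : (fun y => aevalConj y (p * X 1)) = fun y => aevalConj y p * star y := by simp
      rw [hfun, fueter_mul_star_self (differentiable_aevalConj p x), hder, map_add, map_mul,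
        map_mul, aevalConj_X_one, star_mul, star_star]
      calc _ = (x - star x) * (fueter (fun y => aevalConj y p) x - 2 * aevalConj x (pderiv 1 p))
            * star x + 2 * (x * star (aevalConj x p) - star x * star (aevalConj x p)) := by
              noncomm_ring
        _ = _ := by rw [hp, hc.eq]; noncomm_ring

lemma sub_star_mul_fueterBar_aevalConj (p : MvPolynomial (Fin 2) ℝ) (x : ℍ) :
    (x - star x) * (fueterBar (fun y => aevalConj y p) x - 2 * aevalConj x (pderiv 0 p)) =
      2 * (aevalConj x p - star (aevalConj x p)) := by
  induction p using MvPolynomial.induction_on with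
  | C a => simp [fueterBar_const, Algebra.algebraMap_eq_smul_one]
  | add p q hp hq =>
    simp only [map_add,
      fueterBar_add (differentiable_aevalConj p x) (differentiable_aevalConj q x), star_add]
    rw [← sub_eq_zero] at hp hq ⊢
    have h := congrArg₂ (· + ·) hp hq
    rw [add_zero] at h
    convert h using 1
    noncomm_ring
  | mul_X p i hp =>
    match i with
    | 0 =>
      have hc : Commute x (star (aevalConj x p)) := by
        simpa [star_aevalConj] using commute_aevalConj x (X 0) (σ p)
      have hder : pderiv 0 (p * X 0) = pderiv 0 p * X 0 + p := by
        simp [Derivation.leibniz, pderiv_X, mul_comm, add_comm]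
      have hfun : (fun y => aevalConj y (p * X 0)) = fun y => aevalConj y p * y := by simp
      rw [hfun, fueterBar_mul_self (differentiable_aevalConj p x), hder, map_add, map_mul,
        map_mul, aevalConj_X_zero, star_mul]
      calc _ = (x - star x) * (fueterBar (fun y => aevalConj y p) x - 2 * aevalConj x (pderiv 0 p))
            * x + 2 * (x * star (aevalConj x p) - star x * star (aevalConj x p)) := by
              noncomm_ring
        _ = _ := by rw [hp, hc.eq]; noncomm_ring
    | 1 =>
      have hc : Commute (star x) (star (aevalConj x p)) := by
        simpa [star_aevalConj] using commute_aevalConj x (X 1) (σ p)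
      have hder : pderiv 0 (p * X 1) = pderiv 0 p * X 1 := by
        simp [Derivation.leibniz, pderiv_X, mul_comm]
      have hfun : (fun y => aevalConj y (p * X 1)) = fun y => aevalConj y p * star y := by simp
      rw [hfun, fueterBar_mul_star_self (differentiable_aevalConj p x), hder, map_mul, map_mul,
        aevalConj_X_one, star_mul, star_star]
      calc _ = (x - star x) * (fueterBar (fun y => aevalConj y p) x - 2 * aevalConj x (pderiv 0 p))
            * star x - 2 * (x * star (aevalConj x p) - star x * star (aevalConj x p)) := by
              noncomm_ring
        _ = _ := by rw [hp, hc.eq]; noncomm_ring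

lemma fueter_aevalConj_eq {p q : MvPolynomial (Fin 2) ℝ}
    (h : (X 0 - X 1) * q = 2 * ((X 0 - X 1) * pderiv 1 p - (p - σ p))) :
    fueter (fun y => aevalConj y p) = fun y => aevalConj y q := by
  have hcont : Continuous fun y => fueter (fun y => aevalConj y p) y - aevalConj y q :=
    (continuous_fueter (contDiff_aevalConj p)).sub (differentiable_aevalConj q).continuous
  refine funext fun x => sub_eq_zero.mp (congrFun (eq_zero_of_sub_star_mul_eq_zero hcont
    fun y => ?_) x)
  have hq := congrArg (aevalConj y) h
  simp only [map_mul, map_sub, map_ofNat, aevalConj_X_zero, aevalConj_X_one,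
    ← star_aevalConj] at hq
  calc _ = (y - star y) * (fueter (fun y => aevalConj y p) y - 2 * aevalConj y (pderiv 1 p))
        + (2 * ((y - star y) * aevalConj y (pderiv 1 p)) - (y - star y) * aevalConj y q) := by
          noncomm_ring
    _ = 0 := by rw [sub_star_mul_fueter_aevalConj, hq]; noncomm_ring

lemma fueterBar_aevalConj_eq {p q : MvPolynomial (Fin 2) ℝ}
    (h : (X 0 - X 1) * q = 2 * ((X 0 - X 1) * pderiv 0 p + (p - σ p))) :
    fueterBar (fun y => aevalConj y p) = fun y => aevalConj y q := by
  have hcont : Continuous fun y => fueterBar (fun y => aevalConj y p) y - aevalConj y q :=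
    (continuous_fueterBar (contDiff_aevalConj p)).sub (differentiable_aevalConj q).continuous
  refine funext fun x => sub_eq_zero.mp (congrFun (eq_zero_of_sub_star_mul_eq_zero hcont
    fun y => ?_) x)
  have hq := congrArg (aevalConj y) h
  simp only [map_mul, map_sub, map_add, map_ofNat, aevalConj_X_zero, aevalConj_X_one,
    ← star_aevalConj] at hq
  calc _ = (y - star y) * (fueterBar (fun y => aevalConj y p) y - 2 * aevalConj y (pderiv 0 p))
        + (2 * ((y - star y) * aevalConj y (pderiv 0 p)) - (y - star y) * aevalConj y q) := by
          noncomm_ring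
    _ = 0 := by rw [sub_star_mul_fueterBar_aevalConj, hq]; noncomm_ring

lemma fueter_aevalConj_X_zero_pow (k : ℕ) :
    fueter (fun y => aevalConj y (X 0 ^ k)) = fun y => aevalConj y (-2 * divDiffPow k) :=
  fueter_aevalConj_eq (by
    simp [pderiv_X]
    linear_combination (-2 : MvPolynomial (Fin 2) ℝ) * divDiffPow_mul k)

lemma fueterBar_aevalConj_divDiffPow (k : ℕ) :
    fueterBar (fun y => aevalConj y (-2 * divDiffPow k)) =
      fun y => aevalConj y (-4 * pderiv 0 (divDiffPow k)) :=
  fueterBar_aevalConj_eq (by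
    simp [Derivation.leibniz, map_ofNat, rename_swap_divDiffPow]
    ring)

lemma fueter_aevalConj_pderiv_divDiffPow (k : ℕ) :
    fueter (fun y => aevalConj y (-4 * pderiv 0 (divDiffPow k))) = fun y => aevalConj y 0 :=
  fueter_aevalConj_eq (by
    simp [Derivation.leibniz, map_ofNat, ← pderiv_rename (Equiv.swap (0 : Fin 2) 1).injective,
      rename_swap_divDiffPow]
    linear_combination (-4 : MvPolynomial (Fin 2) ℝ) * sub_mul_pderiv_pderiv_divDiffPow k)

lemma quatLaplacianH_aevalConj_X_zero_pow (k : ℕ) :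
    quatLaplacianH (fun y => aevalConj y (X 0 ^ k)) =
      fun y => aevalConj y (-4 * pderiv 0 (divDiffPow k)) := by
  ext1 x
  rw [quatLaplacianH_eq_fueterBar_fueter (contDiff_aevalConj _), fueter_aevalConj_X_zero_pow,
    fueterBar_aevalConj_divDiffPow]

lemma quatLaplacianH_aevalConj_pderiv_divDiffPow (k : ℕ) :
    quatLaplacianH (fun y => aevalConj y (-4 * pderiv 0 (divDiffPow k))) = 0 := by
  ext1 x
  rw [quatLaplacianH_eq_fueterBar_fueter (contDiff_aevalConj _),
    fueter_aevalConj_pderiv_divDiffPow]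
  simp [fueterBar_const]

lemma quatLaplacianH_sum_mul_const {ι : Type*} (s : Finset ι) {F : ι → ℍ → ℍ}
    (hF : ∀ i, ContDiff ℝ 2 (F i)) (c : ι → ℍ) :
    quatLaplacianH (fun y => ∑ i ∈ s, F i y * c i) =
      fun y => ∑ i ∈ s, quatLaplacianH (F i) y * c i := by
  ext1 y
  have hmul (i : ι) (v : Fin 2 → ℍ) :
      iteratedFDeriv ℝ 2 (fun y => F i y * c i) y v = iteratedFDeriv ℝ 2 (F i) y v * c i := by
    rw [show (fun y => F i y * c i) = ((ContinuousLinearMap.mul ℝ ℍ).flip (c i)) ∘ F i from rfl,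
      ContinuousLinearMap.iteratedFDeriv_comp_left _ (hF i).contDiffAt le_rfl]
    rfl
  simp only [quatLaplacianH, iteratedFDeriv_fun_sum_apply fun i _ =>
    ((hF i).mul contDiff_const).contDiffAt, _root_.sum_apply, hmul, add_mul, sum_add_distrib]

end Quaternion

open Quaternion

/-- Every quaternionic polynomial `P(x) = Σ_k x^k c_k` is biharmonic: `Δ²P = 0`. -/
theorem polynomial_biharmonic (d : ℕ) (c : ℕ → Quaternion ℝ) (x : Quaternion ℝ) :
    quatLaplacianH
      (quatLaplacianH (fun y => ∑ k ∈ Finset.range (d + 1), y ^ k * c k)) x = 0 := by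
  have hpow : (fun y => ∑ k ∈ range (d + 1), y ^ k * c k) =
      fun y => ∑ k ∈ range (d + 1), aevalConj y (X 0 ^ k) * c k := by
    simp
  rw [hpow, quatLaplacianH_sum_mul_const _ fun _ => contDiff_aevalConj _]
  simp only [quatLaplacianH_aevalConj_X_zero_pow]
  rw [quatLaplacianH_sum_mul_const _ fun _ => contDiff_aevalConj _]
  simp only [quatLaplacianH_aevalConj_pderiv_divDiffPow, Pi.zero_apply, zero_mul, sum_const_zero]
end

section
/- For every natural number k, the function x ↦ x^k on ℍ satisfies ∂̄_CRF(x^k) = −2 Z̃_{k-1}(x), where ∂̄_CRF = ∂/∂x₀ + i ∂/∂x₁ + j ∂/∂x₂ + k ∂/∂x₃ is the Cauchy–Riemann–Fueter operator and Z̃_{k-1} is the zonal harmonic defined by Z̃_{-1}=0, Z̃_0=1, Z̃_k(x) = 2Re(x) Z̃_{k-1}(x) − |x|² Z̃_{k-2}(x). -/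
/-- The Cauchy–Riemann–Fueter operator `∂̄ = ∂/∂x₀ + i ∂/∂x₁ + j ∂/∂x₂ + k ∂/∂x₃`
applied to an `ℍ`-valued function. -/
noncomputable def CRF (f : Quaternion ℝ → Quaternion ℝ) (x : Quaternion ℝ) : Quaternion ℝ :=
  fderiv ℝ f x 1 + qi * fderiv ℝ f x qi + qj * fderiv ℝ f x qj + qk * fderiv ℝ f x qk

/-! The derivative of `y ↦ y ^ k` at `x` is `v ↦ ∑ᵢ x^(k-1-i) v x^i`, and for a map
`v ↦ a v b` the Fueter operator produces `(a + i a i + j a j + k a k) b = -2 ā b`. Hence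
`∂̄ x^k = -2 ∑ᵢ x̄^(k-1-i) x^i`. Since `x` and `x̄` commute, with `x + x̄ = 2 Re x` and
`x x̄ = |x|²`, this two-variable geometric sum obeys the recurrence defining `Z̃_{k-1}`. -/

open Finset

protected lemma Commute.geom_sum₂_add_two {R : Type*} [Ring R] {x y : R} (h : Commute x y)
    (n : ℕ) :
    ∑ i ∈ range (n + 2), x ^ i * y ^ (n + 1 - i) =
      (x + y) * ∑ i ∈ range (n + 1), x ^ i * y ^ (n - i)
        - x * y * ∑ i ∈ range n, x ^ i * y ^ (n - 1 - i) := by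
  have h₁ := h.geom_sum₂_succ_eq (n := n + 1)
  rw [Nat.add_sub_cancel] at h₁
  rw [h₁, h.geom_sum₂_succ_eq, pow_succ']
  noncomm_ring

lemma zonal_eq_geom_sum₂ (k : ℕ) (x : Quaternion ℝ) :
    (zonal k x : Quaternion ℝ) = ∑ i ∈ range k, x ^ i * star x ^ (k - 1 - i) := by
  induction k using Nat.twoStepInduction with
  | zero => simp [zonal]
  | one => simp [zonal]
  | more k ih₀ ih₁ =>
    rw [Nat.add_sub_cancel] at ih₁
    rw [show k + 2 - 1 = k + 1 from rfl, star_comm_self.symm.geom_sum₂_add_two, ← ih₁, ← ih₀,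
      Quaternion.self_add_star', Quaternion.self_mul_star, Quaternion.normSq_eq_norm_mul_self,
      ← sq, zonal]
    norm_cast

lemma self_add_basis_sandwich (a : Quaternion ℝ) :
    a + qi * a * qi + qj * a * qj + qk * a * qk = -(star a + star a) := by
  ext <;> simp [Quaternion.re_mul, Quaternion.imI_mul, Quaternion.imJ_mul, Quaternion.imK_mul] <;>
    simp [qi, qj, qk]

lemma basis_sandwich_sum (a b : Quaternion ℝ) :
    a * 1 * b + qi * (a * qi * b) + qj * (a * qj * b) + qk * (a * qk * b) = -2 * star a * b := by
  rw [show -2 * star a = -(star a + star a) by noncomm_ring, ← self_add_basis_sandwich]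
  noncomm_ring

/-- For every `k`, `∂̄_CRF (x^k) = −2 Z̃_{k-1}(x)`. -/
theorem CRF_pow (k : ℕ) (x : Quaternion ℝ) :
    CRF (fun y => y ^ k) x = -2 * ((zonal k x : ℝ) : Quaternion ℝ) := by
  rw [CRF, (hasFDerivAt_pow' k).fderiv]
  simp only [FunLike.coe_sum, Finset.sum_apply, FunLike.coe_smul, Pi.smul_apply,
    ContinuousLinearMap.id_apply, smul_eq_mul, MulOpposite.smul_eq_mul_unop, MulOpposite.unop_op,
    mul_sum, ← sum_add_distrib, basis_sandwich_sum, zonal_eq_geom_sum₂, star_pow]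
  refine sum_congr rfl fun i _ => ?_
  rw [Nat.pred_eq_sub_one, mul_assoc, (star_comm_self.pow_pow _ _).eq]
end

section
/- For every x ∈ ℍ with |x| = 1 and every natural number k, x^k = U_k(x₀) − x̄ U_{k-1}(x₀), where x₀ = Re(x), x̄ is the quaternionic conjugate of x, U_k is the Chebyshev polynomial of the second kind, and U_{-1} := 0. -/
/-- On the unit sphere of `ℍ`, `x^k = U_k(x₀) − x̄ U_{k-1}(x₀)` where `x₀ = Re x`,
`U_k` is the Chebyshev polynomial of the second kind, and `U_{-1} = 0`. -/
theorem pow_eq_chebyshev_on_sphere (x : Quaternion ℝ) (hx : ‖x‖ = 1) (k : ℕ) :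
    x ^ k = (((Polynomial.Chebyshev.U ℝ (k : ℤ)).eval x.re : ℝ) : Quaternion ℝ) -
      star x * (((Polynomial.Chebyshev.U ℝ ((k : ℤ) - 1)).eval x.re : ℝ) : Quaternion ℝ) := by
  have h1 : star x = ((2 * x.re : ℝ) : Quaternion ℝ) - x := by
    ext <;> simp [Quaternion.re_star, two_mul]
  have hn : (Quaternion.normSq x : ℝ) = 1 := by
    rw [Quaternion.normSq_eq_norm_mul_self, hx]; ring
  have h2 : x * star x = 1 := by
    rw [Quaternion.self_mul_star, hn]; simp
  rw [h1, mul_sub] at h2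
  have h3 : x * x = x * ((2 * x.re : ℝ) : Quaternion ℝ) - 1 := by
    rw [← h2, sub_sub_cancel]
  have h4 : (2 : Quaternion ℝ) * (x.re : Quaternion ℝ) = ((2 * x.re : ℝ) : Quaternion ℝ) := by
    rw [two_mul, ← Quaternion.coe_add, ← two_mul]
  have h2coe : ((2 : ℝ) : Quaternion ℝ) = 2 := by
    rw [show (2 : ℝ) = ((2 : ℕ) : ℝ) by norm_num, Quaternion.coe_natCast]; norm_num
  have hsq : x * x = 2 * (x.re : Quaternion ℝ) * x - 1 := by
    rw [h3, h4, ← Quaternion.coe_commutes]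
  have hU : ∀ n : ℤ, (Polynomial.Chebyshev.U ℝ (n + 2)).eval x.re =
      2 * x.re * (Polynomial.Chebyshev.U ℝ (n + 1)).eval x.re
        - (Polynomial.Chebyshev.U ℝ n).eval x.re := by
    intro n
    rw [Polynomial.Chebyshev.U_add_two]
    simp [Polynomial.eval_mul]
  induction k using Nat.twoStepInduction with
  | zero => simp [Polynomial.Chebyshev.U_zero, Polynomial.Chebyshev.U_neg_one]
  | one =>
    simp only [Nat.cast_one, Polynomial.Chebyshev.U_one, sub_self, Polynomial.Chebyshev.U_zero,
      Polynomial.eval_one, Polynomial.eval_mul, Polynomial.eval_ofNat, Polynomial.eval_X, pow_one]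
    rw [h1, Quaternion.coe_one, mul_one, sub_sub_cancel]
  | more n ih1 ih2 =>
    have key : x ^ (n + 2) = 2 * (x.re : Quaternion ℝ) * x ^ (n + 1) - x ^ n := by
      rw [pow_add, sq, hsq, mul_sub, mul_one, ← mul_assoc, h4,
        ← Quaternion.coe_commutes, mul_assoc, ← pow_succ, ← h4]
    have e1 : ((n + 2 : ℕ) : ℤ) = (n : ℤ) + 2 := by push_cast; ring
    have e2 : ((n + 2 : ℕ) : ℤ) - 1 = ((n : ℤ) - 1) + 2 := by push_cast; ring
    have e3 : ((n + 1 : ℕ) : ℤ) = (n : ℤ) + 1 := by push_cast; ring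
    have e4 : ((n + 1 : ℕ) : ℤ) - 1 = ((n : ℤ) - 1) + 1 := by push_cast; ring
    have e5 : (n : ℤ) - 1 + 1 = (n : ℤ) := by ring
    rw [key, ih1, ih2, e2, e1, e4, e3, hU, hU ((n : ℤ) - 1), e5]
    simp only [Quaternion.coe_sub, Quaternion.coe_mul, h2coe]
    have key2 : star x *
        (2 * (x.re : Quaternion ℝ) * (((Polynomial.Chebyshev.U ℝ (n : ℤ)).eval x.re : ℝ) : Quaternion ℝ)
          - (((Polynomial.Chebyshev.U ℝ ((n : ℤ) - 1)).eval x.re : ℝ) : Quaternion ℝ)) =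
        2 * (x.re : Quaternion ℝ) *
          (star x * (((Polynomial.Chebyshev.U ℝ (n : ℤ)).eval x.re : ℝ) : Quaternion ℝ))
          - star x * (((Polynomial.Chebyshev.U ℝ ((n : ℤ) - 1)).eval x.re : ℝ) : Quaternion ℝ) := by
      rw [mul_sub]
      congr 1
      have hc := Quaternion.coe_commutes (2 * x.re) (star x)
      rw [h4, ← mul_assoc, ← hc, mul_assoc]
    rw [key2, mul_sub]
    abel
end

section
/- Let P ∈ ℍ[X] be a nonzero quaternionic polynomial (right coefficients, evaluation P(x) = Σ x^k a_k). If x, y ∈ ℍ \ ℝ are two distinct left roots of P lying on the same conjugacy sphere (i.e., Re(x) = Re(y) and |Im(x)| = |Im(y)|), then every point of that sphere is a left root of P: P(z) = 0 for all z with Re(z) = Re(x) and |Im(z)| = |Im(x)|. -/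
/-!
Every quaternion `z` satisfies `z² = 2 Re(z) z - |z|²`, with real (hence central) coefficients, and
these coefficients are the same for all points of a conjugacy sphere. Reducing the powers `z ^ k`
with this relation writes `P(z) = S + z T` on the whole sphere, for quaternions `S`, `T`
independent of `z`. Two distinct roots `x ≠ y` then give `(x - y) T = 0`, so `T = 0`, `S = 0`.
-/

open Quaternion

section QuadraticRelation

variable {R A : Type*} [CommRing R] [Ring A] [Algebra R A]

def quadraticPowCoeffs (t n : R) : ℕ → R × R
  | 0 => (1, 0)
  | k + 1 => (-n * (quadraticPowCoeffs t n k).2,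
      (quadraticPowCoeffs t n k).1 + t * (quadraticPowCoeffs t n k).2)

theorem pow_eq_quadraticPowCoeffs {t n : R} {z : A} (hz : z * z = t • z - n • 1) (k : ℕ) :
    z ^ k = (quadraticPowCoeffs t n k).1 • 1 + (quadraticPowCoeffs t n k).2 • z := by
  induction k with
  | zero => simp [quadraticPowCoeffs]
  | succ k ih =>
    rw [pow_succ, ih, add_mul, smul_mul_assoc, smul_mul_assoc, one_mul, hz, quadraticPowCoeffs]
    simp only [smul_sub, smul_smul]
    module

theorem sum_pow_mul_eq_of_mul_self_eq {t n : R} {z : A} (hz : z * z = t • z - n • 1)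
    (s : Finset ℕ) (a : ℕ → A) :
    ∑ k ∈ s, z ^ k * a k =
      ∑ k ∈ s, (quadraticPowCoeffs t n k).1 • a k +
        z * ∑ k ∈ s, (quadraticPowCoeffs t n k).2 • a k := by
  rw [Finset.mul_sum, ← Finset.sum_add_distrib]
  refine Finset.sum_congr rfl fun k _ => ?_
  rw [pow_eq_quadraticPowCoeffs hz, add_mul, smul_mul_assoc, one_mul, smul_mul_assoc,
    mul_smul_comm]

theorem sum_pow_mul_eq_zero_of_mul_self_eq [NoZeroDivisors A] {t n : R} {x y z : A}
    (hx : x * x = t • x - n • 1) (hy : y * y = t • y - n • 1) (hz : z * z = t • z - n • 1)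
    (hxy : x ≠ y) {s : Finset ℕ} {a : ℕ → A}
    (hx₀ : ∑ k ∈ s, x ^ k * a k = 0) (hy₀ : ∑ k ∈ s, y ^ k * a k = 0) :
    ∑ k ∈ s, z ^ k * a k = 0 := by
  rw [sum_pow_mul_eq_of_mul_self_eq hx] at hx₀
  rw [sum_pow_mul_eq_of_mul_self_eq hy] at hy₀
  rw [sum_pow_mul_eq_of_mul_self_eq hz]
  set S := ∑ k ∈ s, (quadraticPowCoeffs t n k).1 • a k
  set T := ∑ k ∈ s, (quadraticPowCoeffs t n k).2 • a k
  have hT : T = 0 := by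
    have h : (x - y) * T = 0 := by
      rw [sub_mul, add_left_cancel (hx₀.trans hy₀.symm), sub_self]
    exact (mul_eq_zero.mp h).resolve_left (sub_ne_zero.mpr hxy)
  have hS : S = 0 := by simpa [hT] using hx₀
  rw [hS, hT, mul_zero, add_zero]

end QuadraticRelation

theorem Quaternion.mul_self_eq_two_re_smul_sub {R : Type*} [CommRing R] (z : ℍ[R]) :
    z * z = (2 * z.re) • z - normSq z • 1 := by
  have h : z * (2 * z.re : R) - z * z = normSq z := by
    rw [← mul_sub, ← star_eq_two_re_sub, self_mul_star]
  rw [← mul_coe_eq_smul, ← coe_one, smul_coe, mul_one, ← h, sub_sub_cancel]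

theorem Quaternion.normSq_eq_re_sq_add_norm_im_sq (z : ℍ) :
    normSq z = z.re ^ 2 + ‖z.im‖ ^ 2 := by
  rw [sq ‖z.im‖, ← normSq_eq_norm_mul_self]
  simp only [normSq_def', re_im, imI_im, imJ_im, imK_im]
  ring

theorem spherical_zeros_general (d : ℕ) (a : ℕ → Quaternion ℝ)
    (x y : Quaternion ℝ) (hxy : x ≠ y)
    (hre : x.re = y.re) (him : ‖x.im‖ = ‖y.im‖)
    (hx : (∑ k ∈ Finset.range (d + 1), x ^ k * a k) = 0)
    (hy : (∑ k ∈ Finset.range (d + 1), y ^ k * a k) = 0) :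
    ∀ z : Quaternion ℝ, z.re = x.re → ‖z.im‖ = ‖x.im‖ →
      (∑ k ∈ Finset.range (d + 1), z ^ k * a k) = 0 := by
  have sphere_relation : ∀ w : ℍ, w.re = x.re → ‖w.im‖ = ‖x.im‖ →
      w * w = (2 * x.re) • w - normSq x • 1 := by
    intro w hwre hwim
    rw [mul_self_eq_two_re_smul_sub, normSq_eq_re_sq_add_norm_im_sq,
      normSq_eq_re_sq_add_norm_im_sq, hwre, hwim]
  intro z hzre hzim
  exact sum_pow_mul_eq_zero_of_mul_self_eq (sphere_relation x rfl rfl)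
    (sphere_relation y hre.symm him.symm) (sphere_relation z hzre hzim) hxy hx hy

/-- **Zeros of quaternionic polynomials on conjugacy spheres.**
If a nonzero quaternionic polynomial `P(x) = Σ_{k=0}^d x^k a_k` has two distinct
non-real left roots `x, y` on the same conjugacy sphere (`Re x = Re y`,
`‖Im x‖ = ‖Im y‖`), then every point of that sphere is a left root of `P`. -/
theorem spherical_zeros (d : ℕ) (a : ℕ → Quaternion ℝ)
    (hP : ∃ k ∈ Finset.range (d + 1), a k ≠ 0)
    (x y : Quaternion ℝ) (hxr : x.im ≠ 0) (hyr : y.im ≠ 0) (hxy : x ≠ y)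
    (hre : x.re = y.re) (him : ‖x.im‖ = ‖y.im‖)
    (hx : (∑ k ∈ Finset.range (d + 1), x ^ k * a k) = 0)
    (hy : (∑ k ∈ Finset.range (d + 1), y ^ k * a k) = 0) :
    ∀ z : Quaternion ℝ, z.re = x.re → ‖z.im‖ = ‖x.im‖ →
      (∑ k ∈ Finset.range (d + 1), z ^ k * a k) = 0 :=
  spherical_zeros_general d a x y hxy hre him hx hy
end

section
/- Let P(X) = X³ − X²(i+j+k) + X(i−j+k) + 1 in ℍ[X] (so P = (X−i)·(X−j)·(X−k) as a ∗-product). Then the maximum of |P(x)| over the unit sphere {x ∈ ℍ : |x| = 1} is attained at ỹ = (1−√19)/6 − i(5+√19)/12 + k(1−√19)/12. -/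
/-!
For `x = a + bi + cj + dk` on the unit sphere, `‖P x‖² = 8 (1 - a - b + ab + ad + a³)`.
Completing the squares in `b`, `c`, `d` against `b² + c² + d² = 1 - a²` leaves the cubic
`8a³ - 4a² - 12a + 18`, whose local maximum is at the critical point `a₀ = (1 - √19)/6` and
dominates its values on `a ≤ 1`. Hence `(430 + 38√19)/27 - ‖P x‖²` is a sum of nonnegative
terms, all vanishing exactly at `a = a₀`, `b = (a₀ - 1)/2`, `c = 0`, `d = a₀/2`, i.e. at `ỹ`.
-/

open Quaternion

namespace Quaternion

lemma norm_eq_one_iff_normSq_eq_one (x : Quaternion ℝ) : ‖x‖ = 1 ↔ normSq x = 1 := by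
  rw [normSq_eq_norm_mul_self, ← mul_self_inj (norm_nonneg x) zero_le_one, one_mul]

lemma norm_le_norm_iff_normSq_le (x y : Quaternion ℝ) : ‖x‖ ≤ ‖y‖ ↔ normSq x ≤ normSq y := by
  rw [normSq_eq_norm_mul_self, normSq_eq_norm_mul_self,
    mul_self_le_mul_self_iff (norm_nonneg x) (norm_nonneg y)]

end Quaternion

lemma normSq_cubic_of_normSq_eq_one (x : Quaternion ℝ) (hx : normSq x = 1) :
    normSq (x ^ 3 - x ^ 2 * (qi + qj + qk) + x * (qi - qj + qk) + 1)
      = 8 * (1 - x.re - x.imI + x.re * x.imI + x.re * x.imK + x.re ^ 3) := by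
  rw [normSq_def'] at hx ⊢
  simp only [pow_succ, pow_zero, one_mul,
    re_mul, imI_mul, imJ_mul, imK_mul, re_add, imI_add, imJ_add, imK_add,
    re_sub, imI_sub, imJ_sub, imK_sub, re_one, imI_one, imJ_one, imK_one]
  obtain ⟨a, b, c, d⟩ := x
  simp only [qi, qj, qk] at hx ⊢
  linear_combination (7 + 2*d + 4*d^2 - 2*d^3 + d^4 - 2*c - 2*c*d^2 + 4*c^2 - 2*c^2*d
    + 2*c^2*d^2 - 2*c^3 + c^4 - 6*b - 2*b*d^2 - 2*b*c^2 + 4*b^2 - 2*b^2*d + 2*b^2*d^2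
    - 2*b^2*c + 2*b^2*c^2 - 2*b^3 + b^4 - 8*a + 4*a*d - 4*a*c + 4*a*b + 4*a^2
    - 2*a^2*d + 2*a^2*d^2 - 2*a^2*c + 2*a^2*c^2 - 2*a^2*b + 2*a^2*b^2 + a^4) * hx

lemma max_sub_eq_sum_sq {a b c d s : ℝ} (hs : s ^ 2 = 19)
    (h : a ^ 2 + b ^ 2 + c ^ 2 + d ^ 2 = 1) :
    (430 + 38 * s) / 27 - 8 * (1 - a - b + a * b + a * d + a ^ 3)
      = 8 * ((a - (1 - s) / 6) ^ 2 * ((1 + 2 * s) / 6 - a)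
          + ((a - 1) / 2 - b) ^ 2 + (a / 2 - d) ^ 2 + c ^ 2) := by
  linear_combination (1/9 - 2*a/3 - 2*s/27) * hs - 8 * h

lemma le_max_of_sum_sq_eq_one {a b c d s : ℝ} (hs : s ^ 2 = 19) (hs0 : 0 ≤ s)
    (h : a ^ 2 + b ^ 2 + c ^ 2 + d ^ 2 = 1) :
    8 * (1 - a - b + a * b + a * d + a ^ 3) ≤ (430 + 38 * s) / 27 := by
  have ha : a ≤ (1 + 2 * s) / 6 := by nlinarith [sq_nonneg b, sq_nonneg c, sq_nonneg d]
  have hsum := max_sub_eq_sum_sq hs h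
  have hcubic : 0 ≤ (a - (1 - s) / 6) ^ 2 * ((1 + 2 * s) / 6 - a) :=
    mul_nonneg (sq_nonneg _) (by linarith)
  nlinarith [sq_nonneg ((a - 1) / 2 - b), sq_nonneg (a / 2 - d), sq_nonneg c]

/-- For `P(X) = X³ − X²(i+j+k) + X(i−j+k) + 1`, the maximum of `‖P‖` over the unit
sphere of `ℍ` is attained at `ỹ = (1−√19)/6 − i(5+√19)/12 + k(1−√19)/12`. -/
theorem max_modulus_attained :
    let P : Quaternion ℝ → Quaternion ℝ :=
      fun x => x ^ 3 - x ^ 2 * (qi + qj + qk) + x * (qi - qj + qk) + 1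
    let yt : Quaternion ℝ :=
      ⟨(1 - Real.sqrt 19) / 6, -(5 + Real.sqrt 19) / 12, 0, (1 - Real.sqrt 19) / 12⟩
    ‖yt‖ = 1 ∧ ∀ x : Quaternion ℝ, ‖x‖ = 1 → ‖P x‖ ≤ ‖P yt‖ := by
  intro P yt
  have hs : √19 ^ 2 = 19 := Real.sq_sqrt (by norm_num)
  have hyt : normSq yt = 1 := by
    rw [normSq_def']
    linear_combination (1/24) * hs
  have hPyt : normSq (P yt) = (430 + 38 * √19) / 27 := by
    rw [normSq_cubic_of_normSq_eq_one yt hyt]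
    linear_combination -max_sub_eq_sum_sq hs (by rwa [normSq_def'] at hyt)
  refine ⟨(norm_eq_one_iff_normSq_eq_one yt).2 hyt, fun x hx => ?_⟩
  rw [norm_eq_one_iff_normSq_eq_one] at hx
  rw [norm_le_norm_iff_normSq_le, hPyt, normSq_cubic_of_normSq_eq_one x hx]
  exact le_max_of_sum_sq_eq_one hs (Real.sqrt_nonneg 19) (by rwa [normSq_def'] at hx)
end
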